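/- arXiv:2401.02722 — 12 statements merged into one kernel-verified Lean document; each statement's English description precedes it below -/
import Mathlib

section
/- Let (X_i) and (Y_i) be inverse systems of spectral spaces with spectral transition maps, indexed by a directed set, with limits X and Y, and let f_i : X_i → Y_i be a natural transformation with limit f : X → Y. If each f_i is a closed map with finite fibers, then the image of f equals the intersection over all i of π_i^{-1}(Im f_i), where π_i : Y → Y_i is the canonical projection. -/
open Topology

/-- A spectral space: quasi-compact, sober (T0 + quasi-sober), with a basis of
quasi-compact open subsets stable under finite intersections. -/
def IsSpectralSpace (α : Type*) [TopologicalSpace α] : Prop :=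
  CompactSpace α ∧ T0Space α ∧ QuasiSober α ∧
  TopologicalSpace.IsTopologicalBasis {U : Set α | IsOpen U ∧ IsCompact U} ∧
  ∀ U V : Set α, IsOpen U → IsCompact U → IsOpen V → IsCompact V → IsCompact (U ∩ V)

/-- The limit of an inverse system, computed in topological spaces (as the subspace of
compatible families in the product). -/
abbrev InvLimit {ι : Type*} [Preorder ι] (X : ι → Type*)
    (F : ∀ ⦃i j : ι⦄, i ≤ j → X j → X i) : Type _ :=
  {u : ∀ i, X i // ∀ ⦃i j : ι⦄ (h : i ≤ j), F h (u j) = u i}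

open CategoryTheory in
/-- Given inverse systems `(X i)`, `(Y i)` of spectral spaces with spectral transition
maps over a directed index set, and a natural transformation `f i : X i → Y i` of
closed maps with finite fibers, the limit map `F : lim X → lim Y` has image equal to
`⋂ i, π i ⁻¹' (range (f i))`. -/
theorem stmt_0 {ι : Type*} [Preorder ι] [IsDirected ι (· ≤ ·)]
    (X Y : ι → Type*) [∀ i, TopologicalSpace (X i)] [∀ i, TopologicalSpace (Y i)]
    (hX : ∀ i, IsSpectralSpace (X i)) (hY : ∀ i, IsSpectralSpace (Y i))
    (FX : ∀ ⦃i j : ι⦄, i ≤ j → X j → X i) (FY : ∀ ⦃i j : ι⦄, i ≤ j → Y j → Y i)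
    (hFXid : ∀ (i : ι) (x : X i), FX (le_refl i) x = x)
    (hFYid : ∀ (i : ι) (y : Y i), FY (le_refl i) y = y)
    (hFXcomp : ∀ ⦃i j k : ι⦄ (hij : i ≤ j) (hjk : j ≤ k) (x : X k),
      FX hij (FX hjk x) = FX (hij.trans hjk) x)
    (hFYcomp : ∀ ⦃i j k : ι⦄ (hij : i ≤ j) (hjk : j ≤ k) (y : Y k),
      FY hij (FY hjk y) = FY (hij.trans hjk) y)
    (hFXspec : ∀ ⦃i j : ι⦄ (h : i ≤ j), IsSpectralMap (FX h))
    (hFYspec : ∀ ⦃i j : ι⦄ (h : i ≤ j), IsSpectralMap (FY h))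
    (f : ∀ i, X i → Y i)
    (hfspec : ∀ i, IsSpectralMap (f i))
    (hfclosed : ∀ i, IsClosedMap (f i))
    (hffib : ∀ (i : ι) (y : Y i), (f i ⁻¹' {y}).Finite)
    (hnat : ∀ ⦃i j : ι⦄ (h : i ≤ j) (x : X j), FY h (f j x) = f i (FX h x))
    (F : InvLimit X FX → InvLimit Y FY)
    (hF : ∀ (u : InvLimit X FX) (i : ι), (F u).val i = f i (u.val i)) :
    Set.range F = ⋂ i : ι, (fun y : InvLimit Y FY => y.val i) ⁻¹' Set.range (f i) := by
  classical
  ext y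
  simp only [Set.mem_iInter, Set.mem_preimage, Set.mem_range]
  constructor
  · rintro ⟨u, rfl⟩ i
    exact ⟨u.val i, (hF u i).symm⟩
  · intro hy
    let G : ιᵒᵖ ⥤ Type _ :=
      { obj := fun i => {x : X i.unop // f i.unop x = y.val i.unop}
        map := fun {i j} h => TypeCat.ofHom fun x => ⟨FX (CategoryTheory.leOfHom h.unop) x.val, by
          rw [← hnat (CategoryTheory.leOfHom h.unop) x.val, x.prop,
            y.prop (CategoryTheory.leOfHom h.unop)]⟩
        map_id := fun i => by ext x; exact hFXid _ _
        map_comp := fun {i j k} hij hjk => by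
          ext x; exact (hFXcomp _ _ _).symm }
    have hfin : ∀ i : ιᵒᵖ, Finite (G.obj i) := fun i => by
      have e : G.obj i ≃ (f i.unop ⁻¹' {y.val i.unop}) :=
        Equiv.subtypeEquivRight (fun x => by simp [Set.mem_preimage])
      have := (hffib i.unop (y.val i.unop)).to_subtype
      exact Finite.of_equiv _ e.symm
    have hne : ∀ i : ιᵒᵖ, Nonempty (G.obj i) := fun i => by
      obtain ⟨x, hx⟩ := hy i.unop
      exact ⟨⟨x, hx⟩⟩
    obtain ⟨s, hs⟩ := nonempty_sections_of_finite_inverse_system G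
    refine ⟨⟨fun i => (s ⟨i⟩).val, fun i j h => ?_⟩, ?_⟩
    · exact congrArg Subtype.val (hs (CategoryTheory.homOfLE h).op)
    · exact Subtype.ext (funext fun i => (hF _ i).trans (s ⟨i⟩).prop)
end

section
/- Let (X_i) and (Y_i) be inverse systems of spectral spaces with spectral transition maps, with limits X and Y, and let f_i : X_i → Y_i be a natural transformation with limit f : X → Y. If each f_i is a closed map with finite fibers, then f is a closed map. -/
open Topology

/-- Given inverse systems `(X i)`, `(Y i)` of spectral spaces with spectral transition
maps over a directed index set, and a natural transformation `f i : X i → Y i` of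
closed maps with finite fibers, the limit map `F : lim X → lim Y` is a closed map.
-/
theorem stmt_1 {ι : Type*} [Preorder ι] [IsDirected ι (· ≤ ·)]
    (X Y : ι → Type*) [∀ i, TopologicalSpace (X i)] [∀ i, TopologicalSpace (Y i)]
    (hX : ∀ i, IsSpectralSpace (X i)) (hY : ∀ i, IsSpectralSpace (Y i))
    (FX : ∀ ⦃i j : ι⦄, i ≤ j → X j → X i) (FY : ∀ ⦃i j : ι⦄, i ≤ j → Y j → Y i)
    (hFXid : ∀ (i : ι) (x : X i), FX (le_refl i) x = x)
    (hFYid : ∀ (i : ι) (y : Y i), FY (le_refl i) y = y)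
    (hFXcomp : ∀ ⦃i j k : ι⦄ (hij : i ≤ j) (hjk : j ≤ k) (x : X k),
      FX hij (FX hjk x) = FX (hij.trans hjk) x)
    (hFYcomp : ∀ ⦃i j k : ι⦄ (hij : i ≤ j) (hjk : j ≤ k) (y : Y k),
      FY hij (FY hjk y) = FY (hij.trans hjk) y)
    (hFXspec : ∀ ⦃i j : ι⦄ (h : i ≤ j), IsSpectralMap (FX h))
    (hFYspec : ∀ ⦃i j : ι⦄ (h : i ≤ j), IsSpectralMap (FY h))
    (f : ∀ i, X i → Y i)
    (hfspec : ∀ i, IsSpectralMap (f i))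
    (hfclosed : ∀ i, IsClosedMap (f i))
    (hffib : ∀ (i : ι) (y : Y i), (f i ⁻¹' {y}).Finite)
    (hnat : ∀ ⦃i j : ι⦄ (h : i ≤ j) (x : X j), FY h (f j x) = f i (FX h x))
    (F : InvLimit X FX → InvLimit Y FY)
    (hF : ∀ (u : InvLimit X FX) (i : ι), (F u).val i = f i (u.val i)) :
    IsClosedMap F := by
  classical
  intro C hC
  -- projections
  set πX : ∀ i : ι, InvLimit X FX → X i := fun i u => u.val i with hπX
  have hπXcont : ∀ i, Continuous (πX i) := fun i =>
    (continuous_apply i).comp continuous_subtype_val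
  have hπYcont : ∀ i, Continuous (fun u : InvLimit Y FY => u.val i) := fun i =>
    (continuous_apply i).comp continuous_subtype_val
  rw [← closure_subset_iff_isClosed]
  rintro y hy
  -- F '' C is nonempty
  have hFCne : (F '' C).Nonempty := by
    rcases (F '' C).eq_empty_or_nonempty with h | h
    · rw [h, closure_empty] at hy; exact absurd hy (Set.notMem_empty y)
    · exact h
  have hCne : C.Nonempty := by
    obtain ⟨_, u, hu, _⟩ := hFCne
    exact ⟨u, hu⟩
  -- the key finite sets
  set E : ∀ i : ι, Set (X i) := fun i =>
    f i ⁻¹' {y.val i} ∩ closure (πX i '' C) with hE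
  -- each E i is nonempty
  have hEne : ∀ i, (E i).Nonempty := by
    intro i
    have hKclosed : IsClosed (f i '' closure (πX i '' C)) :=
      hfclosed i _ isClosed_closure
    have hyK : y.val i ∈ f i '' closure (πX i '' C) := by
      by_contra hyK
      have hopen : IsOpen ((fun u : InvLimit Y FY => u.val i) ⁻¹'
          (f i '' closure (πX i '' C))ᶜ) := hKclosed.isOpen_compl.preimage (hπYcont i)
      obtain ⟨z, hz1, hz2⟩ := mem_closure_iff.1 hy _ hopen hyK
      obtain ⟨u, huC, rfl⟩ := hz2
      refine hz1 ?_
      show (F u).val i ∈ f i '' closure (πX i '' C)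
      rw [hF u i]
      exact ⟨u.val i, subset_closure ⟨u, huC, rfl⟩, rfl⟩
    obtain ⟨x, hx1, hx2⟩ := hyK
    exact ⟨x, hx2, hx1⟩
  -- each E i is finite
  have hEfin : ∀ i, (E i).Finite := fun i =>
    (hffib i (y.val i)).subset Set.inter_subset_left
  -- transition maps carry E j into E i
  have hEmap : ∀ ⦃i j : ι⦄ (h : i ≤ j), Set.MapsTo (FX h) (E j) (E i) := by
    rintro i j h x ⟨hx1, hx2⟩
    constructor
    · have : FY h (f j x) = f i (FX h x) := hnat h x
      rw [Set.mem_preimage, Set.mem_singleton_iff] at hx1 ⊢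
      rw [← this, hx1, y.property h]
    · have himg : FX h '' (πX j '' C) ⊆ πX i '' C := by
        rintro _ ⟨_, ⟨u, huC, rfl⟩, rfl⟩
        exact ⟨u, huC, (u.property h).symm⟩
      have := image_closure_subset_closure_image (s := πX j '' C) (hFXspec h).continuous
      exact closure_mono himg (this ⟨x, hx2, rfl⟩)
  -- build a compatible family via König's lemma
  obtain ⟨x, hxE, hxcomp⟩ :
      ∃ x : ∀ i, X i, (∀ i, x i ∈ E i) ∧ ∀ ⦃i j : ι⦄ (h : i ≤ j), FX h (x j) = x i := by
    open CategoryTheory in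
    let G : ιᵒᵖ ⥤ Type _ :=
      { obj := fun i => ↥(E i.unop)
        map := fun {i j} g => TypeCat.ofHom fun z => ⟨FX (leOfHom g.unop) z.val, hEmap (leOfHom g.unop) z.property⟩
        map_id := by
          intro i
          ext z
          exact hFXid i.unop z.val
        map_comp := by
          intro i j k g h
          ext z
          exact (hFXcomp (leOfHom h.unop) (leOfHom g.unop) z.val).symm }
    haveI : ∀ j : ιᵒᵖ, Finite (G.obj j) := fun j => (hEfin j.unop).to_subtype
    haveI : ∀ j : ιᵒᵖ, Nonempty (G.obj j) := fun j => (hEne j.unop).to_subtype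
    obtain ⟨u, hu⟩ := nonempty_sections_of_finite_inverse_system G
    refine ⟨fun i => (u (Opposite.op i)).val, fun i => (u (Opposite.op i)).property, ?_⟩
    intro i j h
    have := hu (CategoryTheory.homOfLE h).op
    exact congrArg Subtype.val this
  set x' : InvLimit X FX := ⟨x, hxcomp⟩ with hx'
  -- x' belongs to C
  have hx'C : x' ∈ C := by
    by_contra hnot
    have hCopen : IsOpen (Cᶜ : Set (InvLimit X FX)) := hC.isOpen_compl
    rw [isOpen_induced_iff] at hCopen
    obtain ⟨W, hW, hWeq⟩ := hCopen
    have hx'W : x ∈ W := by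
      have : x' ∈ Cᶜ := hnot
      rw [← hWeq] at this
      exact this
    rcases isEmpty_or_nonempty ι with hι | hι
    · obtain ⟨c, hc⟩ := hCne
      have : x' = c := Subtype.ext (funext fun i => isEmptyElim i)
      exact hnot (this ▸ hc)
    · obtain ⟨I, U, hU, hIU⟩ := isOpen_pi_iff.1 hW x hx'W
      obtain ⟨j, hj⟩ := I.exists_le
      -- an open set in X j refining the basic open
      set V : Set (X j) :=
        ⋂ i ∈ I, (if hi : i ∈ I then (FX (hj i hi)) ⁻¹' U i else Set.univ) with hV
      have hVopen : IsOpen V := by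
        refine I.finite_toSet.isOpen_biInter fun i hi => ?_
        have hi' : i ∈ I := Finset.mem_coe.mp hi
        rw [dif_pos hi']
        exact (hU i hi').1.preimage (hFXspec (hj i hi')).continuous
      have hxV : x j ∈ V := by
        refine Set.mem_iInter₂.2 fun i hi => ?_
        rw [dif_pos hi]
        show FX (hj i hi) (x j) ∈ U i
        rw [hxcomp (hj i hi)]
        exact (hU i hi).2
      have hxcl : x j ∈ closure (πX j '' C) := (hxE j).2
      obtain ⟨z, hzV, hz2⟩ := mem_closure_iff.1 hxcl _ hVopen hxV
      obtain ⟨c, hcC, rfl⟩ := hz2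
      have hcW : c.val ∈ W := by
        refine hIU fun i hi => ?_
        have hi' : i ∈ I := Finset.mem_coe.mp hi
        have h2 := Set.mem_iInter₂.1 hzV i hi'
        rw [dif_pos hi'] at h2
        have h3 : FX (hj i hi') (c.val j) ∈ U i := h2
        rwa [c.property (hj i hi')] at h3
      have : c ∈ Cᶜ := by rw [← hWeq]; exact hcW
      exact this hcC
  -- F x' = y
  refine ⟨x', hx'C, ?_⟩
  refine Subtype.ext (funext fun i => ?_)
  rw [hF x' i]
  exact (hxE i).1
end

section
/- Let G be a profinite group, written as the inverse limit of an inverse system of profinite groups G_α with surjective transition maps. Then the canonical map from the set of closed subgroups of G to the inverse limit of the sets of closed subgroups of the G_α is a bijection. -/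
/-- The subgroup of compatible families in the product, i.e. the inverse limit of the
system of groups `Gs` along the transition homomorphisms `φ`. -/
def limSubgroup {ι : Type*} [Preorder ι] (Gs : ι → Type*) [∀ i, Group (Gs i)]
    (φ : ∀ ⦃i j : ι⦄, i ≤ j → Gs j →* Gs i) : Subgroup (∀ i, Gs i) where
  carrier := {u | ∀ ⦃i j : ι⦄ (h : i ≤ j), φ h (u j) = u i}
  one_mem' := by intro i j h; simp
  mul_mem' := by
    intro a b ha hb i j h
    simp only [Pi.mul_apply, map_mul, ha h, hb h]
  inv_mem' := by
    intro a ha i j h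
    simp only [Pi.inv_apply, map_inv, ha h]

/-- The projection from the inverse limit to the `i`-th group. -/
def limProj {ι : Type*} [Preorder ι] (Gs : ι → Type*) [∀ i, Group (Gs i)]
    (φ : ∀ ⦃i j : ι⦄, i ≤ j → Gs j →* Gs i) (i : ι) :
    ↥(limSubgroup Gs φ) →* Gs i :=
  (Pi.evalMonoidHom Gs i).comp (limSubgroup Gs φ).subtype

section Aux

variable {ι : Type*} [Preorder ι] (Gs : ι → Type*) [∀ i, Group (Gs i)]
  [∀ i, TopologicalSpace (Gs i)]

lemma limSubgroup_isClosed' [∀ i, T2Space (Gs i)]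
    (φ : ∀ ⦃i j : ι⦄, i ≤ j → Gs j →* Gs i)
    (hφcont : ∀ ⦃i j : ι⦄ (h : i ≤ j), Continuous (φ h)) :
    IsClosed ((limSubgroup Gs φ : Set (∀ i, Gs i))) := by
  have : ((limSubgroup Gs φ : Set (∀ i, Gs i))) =
      ⋂ (i : ι), ⋂ (j : ι), ⋂ (h : i ≤ j), {u : ∀ i, Gs i | φ h (u j) = u i} := by
    ext u
    simp only [Set.mem_iInter, Set.mem_setOf_eq]
    rfl
  rw [this]
  exact isClosed_iInter fun i => isClosed_iInter fun j => isClosed_iInter fun h =>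
    isClosed_eq ((hφcont h).comp (continuous_apply j)) (continuous_apply i)

lemma limProj_continuous' (φ : ∀ ⦃i j : ι⦄, i ≤ j → Gs j →* Gs i) (i : ι) :
    Continuous (limProj Gs φ i) :=
  (continuous_apply i).comp continuous_subtype_val

end Aux

/-- Let `G` be a profinite group, written as the inverse limit of an inverse system of
profinite groups `Gs i` with surjective (continuous) transition maps.  Then the
canonical map `H ↦ (image of H in Gs i)_i` from closed subgroups of `G` to compatible
families of closed subgroups of the `Gs i` is a bijection: it is injective, and every
compatible family of closed subgroups arises from a closed subgroup of `G`. -/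
theorem stmt_2 {ι : Type*} [Preorder ι] [IsDirected ι (· ≤ ·)] [Nonempty ι]
    (Gs : ι → Type*) [∀ i, Group (Gs i)] [∀ i, TopologicalSpace (Gs i)]
    [∀ i, IsTopologicalGroup (Gs i)] [∀ i, CompactSpace (Gs i)]
    [∀ i, TotallyDisconnectedSpace (Gs i)] [∀ i, T2Space (Gs i)]
    (φ : ∀ ⦃i j : ι⦄, i ≤ j → Gs j →* Gs i)
    (hφcont : ∀ ⦃i j : ι⦄ (h : i ≤ j), Continuous (φ h))
    (hφsurj : ∀ ⦃i j : ι⦄ (h : i ≤ j), Function.Surjective (φ h))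
    (hφid : ∀ (i : ι) (x : Gs i), φ (le_refl i) x = x)
    (hφcomp : ∀ ⦃i j k : ι⦄ (hij : i ≤ j) (hjk : j ≤ k) (x : Gs k),
      φ hij (φ hjk x) = φ (hij.trans hjk) x) :
    (∀ H₁ H₂ : Subgroup ↥(limSubgroup Gs φ),
      IsClosed (H₁ : Set ↥(limSubgroup Gs φ)) → IsClosed (H₂ : Set ↥(limSubgroup Gs φ)) →
      (∀ i, H₁.map (limProj Gs φ i) = H₂.map (limProj Gs φ i)) → H₁ = H₂) ∧
    (∀ K : ∀ i, Subgroup (Gs i),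
      (∀ i, IsClosed (K i : Set (Gs i))) →
      (∀ ⦃i j : ι⦄ (h : i ≤ j), (K j).map (φ h) = K i) →
      ∃ H : Subgroup ↥(limSubgroup Gs φ), IsClosed (H : Set ↥(limSubgroup Gs φ)) ∧
        ∀ i, H.map (limProj Gs φ i) = K i) := by
  -- The inverse limit is a compact space.
  have hLclosed : IsClosed ((limSubgroup Gs φ : Set (∀ i, Gs i))) :=
    limSubgroup_isClosed' Gs φ hφcont
  haveI : CompactSpace ↥(limSubgroup Gs φ) :=
    isCompact_iff_compactSpace.mp hLclosed.isCompact
  constructor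
  · -- injectivity
    have key : ∀ H₁ H₂ : Subgroup ↥(limSubgroup Gs φ),
        IsClosed (H₂ : Set ↥(limSubgroup Gs φ)) →
        (∀ i, H₁.map (limProj Gs φ i) = H₂.map (limProj Gs φ i)) → H₁ ≤ H₂ := by
      intro H₁ H₂ hc₂ himg u hu
      -- closed sets C i
      set C : ι → Set ↥(limSubgroup Gs φ) :=
        fun i => (H₂ : Set ↥(limSubgroup Gs φ)) ∩ {v | (v : ∀ i, Gs i) i = (u : ∀ i, Gs i) i}
        with hC
      have hCsub : ∀ ⦃i j : ι⦄, i ≤ j → C j ⊆ C i := by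
        intro i j hij v hv
        refine ⟨hv.1, ?_⟩
        have h1 : φ hij ((v : ∀ i, Gs i) j) = (v : ∀ i, Gs i) i := v.2 hij
        have h2 : φ hij ((u : ∀ i, Gs i) j) = (u : ∀ i, Gs i) i := u.2 hij
        have := hv.2
        simp only [Set.mem_setOf_eq] at this ⊢
        rw [← h1, this, h2]
      have hCcl : ∀ i, IsClosed (C i) := by
        intro i
        exact hc₂.inter (isClosed_eq ((continuous_apply i).comp continuous_subtype_val)
          continuous_const)
      have hCne : ∀ i, (C i).Nonempty := by
        intro i
        have : limProj Gs φ i u ∈ H₁.map (limProj Gs φ i) := ⟨u, hu, rfl⟩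
        rw [himg i] at this
        obtain ⟨v, hv, hvu⟩ := this
        exact ⟨v, hv, hvu⟩
      have hdir : Directed (· ⊇ ·) C := by
        intro i j
        obtain ⟨k, hik, hjk⟩ := directed_of (· ≤ ·) i j
        exact ⟨k, hCsub hik, hCsub hjk⟩
      obtain ⟨v, hv⟩ := IsCompact.nonempty_iInter_of_directed_nonempty_isCompact_isClosed C
        hdir hCne (fun i => (hCcl i).isCompact) hCcl
      have : v = u := by
        apply Subtype.ext
        funext i
        exact (Set.mem_iInter.mp hv i).2
      rw [← this]
      exact (Set.mem_iInter.mp hv (Classical.arbitrary ι)).1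
    intro H₁ H₂ hc₁ hc₂ himg
    exact le_antisymm (key H₁ H₂ hc₂ himg) (key H₂ H₁ hc₁ fun i => (himg i).symm)
  · -- surjectivity
    intro K hKcl hKcomp
    refine ⟨⨅ j, (K j).comap (limProj Gs φ j), ?_, ?_⟩
    · have : ((⨅ j, (K j).comap (limProj Gs φ j) : Subgroup ↥(limSubgroup Gs φ)) :
          Set ↥(limSubgroup Gs φ)) = ⋂ j, (limProj Gs φ j) ⁻¹' (K j) := by
        simp [Subgroup.coe_iInf, Subgroup.coe_comap]
      rw [this]
      exact isClosed_iInter fun j => (hKcl j).preimage (limProj_continuous' Gs φ j)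
    · intro i
      apply le_antisymm
      · rintro x ⟨v, hv, rfl⟩
        exact Subgroup.mem_comap.mp (Subgroup.mem_iInf.mp hv i)
      · -- every x ∈ K i lifts
        intro x hx
        -- compact set of candidate families
        set s : Set (∀ j, Gs j) := {u | u i = x ∧ ∀ j, u j ∈ K j} with hs
        have hscl : IsClosed s := by
          have : s = {u : ∀ j, Gs j | u i = x} ∩ ⋂ j, (fun u : ∀ j, Gs j => u j) ⁻¹' (K j) := by
            ext u
            simp only [hs, Set.mem_setOf_eq, Set.mem_inter_iff, Set.mem_iInter,
              Set.mem_preimage, SetLike.mem_coe]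
          rw [this]
          exact (isClosed_eq (continuous_apply i) continuous_const).inter
            (isClosed_iInter fun j => (hKcl j).preimage (continuous_apply j))
        set Z : (Σ' (a : ι) (b : ι), a ≤ b) → Set (∀ j, Gs j) :=
          fun p => {u | φ p.2.2 (u p.2.1) = u p.1} with hZ
        have hZcl : ∀ p, IsClosed (Z p) := fun p =>
          isClosed_eq ((hφcont p.2.2).comp (continuous_apply p.2.1)) (continuous_apply p.1)
        classical
        have hne : (s ∩ ⋂ p, Z p).Nonempty := by
          by_contra hcon
          rw [Set.not_nonempty_iff_eq_empty] at hcon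
          obtain ⟨t, ht⟩ := hscl.isCompact.elim_finite_subfamily_closed Z hZcl hcon
          -- find an upper bound k of i and all indices in t
          obtain ⟨k, hk⟩ := Finset.exists_le
            (insert i ((t.image fun p => p.1) ∪ (t.image fun p => p.2.1)))
          have hik : i ≤ k := hk i (Finset.mem_insert_self _ _)
          have hbk : ∀ p ∈ t, p.2.1 ≤ k := fun p hp =>
            hk _ (Finset.mem_insert_of_mem (Finset.mem_union_right _
              (Finset.mem_image_of_mem _ hp)))
          -- lift x to K k
          have : x ∈ (K k).map (φ hik) := by rw [hKcomp hik]; exact hx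
          obtain ⟨y, hy, hyx⟩ := this
          -- build the witness
          set u : ∀ j, Gs j := fun j => if h : j ≤ k then φ h y else 1 with hu
          have hus : u ∈ s := by
            constructor
            · simp only [hu, dif_pos hik, hyx]
            · intro j
              by_cases h : j ≤ k
              · simp only [hu, dif_pos h]
                rw [← hKcomp h]
                exact ⟨y, hy, rfl⟩
              · simp only [hu, dif_neg h]
                exact one_mem _
          have huZ : u ∈ ⋂ p ∈ t, Z p := by
            rw [Set.mem_iInter₂]
            intro p hp
            have hbk' : p.2.1 ≤ k := hbk p hp
            have hak' : p.1 ≤ k := p.2.2.trans hbk'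
            simp only [hZ, Set.mem_setOf_eq, hu, dif_pos hbk', dif_pos hak']
            exact hφcomp p.2.2 hbk' y
          exact Set.eq_empty_iff_forall_notMem.mp ht u ⟨hus, huZ⟩
        obtain ⟨u, hus, huZ⟩ := hne
        have hucompat : u ∈ limSubgroup Gs φ := by
          intro a b hab
          exact Set.mem_iInter.mp huZ ⟨a, b, hab⟩
        refine ⟨⟨u, hucompat⟩, Subgroup.mem_iInf.mpr fun j => Subgroup.mem_comap.mpr ?_, hus.1⟩
        exact hus.2 j
end

section
/- Let G be a profinite group and let C, D be closed subgroups of G. If for every open normal subgroup N of G the images CN/N and DN/N are conjugate in G/N, then C and D are conjugate in G. -/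
open TopologicalGroup

/-- membership in `A ⊔ N` for all open normal `N` forces membership in closed `A`. -/
lemma mem_of_forall_mem_sup {G : Type*} [Group G] [TopologicalSpace G] [IsTopologicalGroup G]
    [CompactSpace G] [TotallyDisconnectedSpace G] [T2Space G]
    (A : Subgroup G) (hA : IsClosed (A : Set G)) {x : G}
    (hx : ∀ N : OpenNormalSubgroup G, x ∈ A ⊔ N.toSubgroup) : x ∈ A := by
  by_contra hxA
  have hclosed : IsClosed ((fun a => a⁻¹ * x) '' (A : Set G)) := by
    have : (fun a => a⁻¹ * x) '' (A : Set G) = (fun y => x * y⁻¹) ⁻¹' (A : Set G) := by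
      ext y
      constructor
      · rintro ⟨a, ha, rfl⟩; simpa using ha
      · intro hy; exact ⟨x * y⁻¹, hy, by group⟩
    rw [this]
    exact hA.preimage (by continuity)
  have hone : (1 : G) ∈ ((fun a => a⁻¹ * x) '' (A : Set G))ᶜ := by
    rintro ⟨a, haA, ha⟩
    have : a = x := by rwa [inv_mul_eq_one] at ha
    exact hxA (this ▸ haA)
  obtain ⟨V, hV, h1V, hVsub⟩ := compact_exists_isClopen_in_isOpen hclosed.isOpen_compl hone
  obtain ⟨N, hN⟩ := IsTopologicalGroup.exist_openNormalSubgroup_sub_clopen_nhds_of_one hV h1V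
  have hx' := hx N
  rw [← SetLike.mem_coe, Subgroup.mul_normal] at hx'
  obtain ⟨a, haA, n, hnN, rfl⟩ := hx'
  exact hVsub (hN hnN) ⟨a, haA, by group⟩

lemma conj_coset_eq {G : Type*} [Group G] (C N : Subgroup G) [N.Normal] (g n : G) (hn : n ∈ N) :
    Subgroup.map (MulAut.conj (g * n)).toMonoidHom C ⊔ N =
      Subgroup.map (MulAut.conj g).toMonoidHom C ⊔ N := by
  have key : ∀ (g n : G), n ∈ N →
      Subgroup.map (MulAut.conj (g * n)).toMonoidHom C ≤
        Subgroup.map (MulAut.conj g).toMonoidHom C ⊔ N := by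
    intro g n hn
    rintro _ ⟨c, hc, rfl⟩
    have h1 : g * c * g⁻¹ ∈ Subgroup.map (MulAut.conj g).toMonoidHom C ⊔ N :=
      Subgroup.mem_sup_left ⟨c, hc, rfl⟩
    have h2 : g * (n * c * n⁻¹ * c⁻¹) * g⁻¹ ∈ (N : Subgroup G) := by
      have : n * c * n⁻¹ * c⁻¹ ∈ N := by
        have := Subgroup.Normal.conj_mem ‹N.Normal› n⁻¹ (inv_mem hn) c
        simpa [mul_assoc] using mul_mem hn this
      exact Subgroup.Normal.conj_mem ‹N.Normal› _ this g
    have h3 : g * (n * c * n⁻¹ * c⁻¹) * g⁻¹ ∈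
        Subgroup.map (MulAut.conj g).toMonoidHom C ⊔ N := Subgroup.mem_sup_right h2
    have : (MulAut.conj (g * n)).toMonoidHom c
        = (g * (n * c * n⁻¹ * c⁻¹) * g⁻¹) * (g * c * g⁻¹) := by
      simp [MulAut.conj]
      group
    rw [this]
    exact mul_mem h3 h1
  apply le_antisymm
  · exact sup_le (key g n hn) le_sup_right
  · refine sup_le ?_ le_sup_right
    have := key (g * n) n⁻¹ (inv_mem hn)
    simpa [mul_assoc] using this

/-- Let `G` be a profinite group and `C`, `D` closed subgroups.  If for every open
normal subgroup `N` of `G` the images of `C` and `D` in `G/N` are conjugate, then `C`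
and `D` are conjugate in `G`. -/
theorem stmt_3 {G : Type*} [Group G] [TopologicalSpace G] [IsTopologicalGroup G]
    [CompactSpace G] [TotallyDisconnectedSpace G] [T2Space G]
    (C D : Subgroup G) (hC : IsClosed (C : Set G)) (hD : IsClosed (D : Set G))
    (h : ∀ (N : Subgroup G) [N.Normal], IsOpen (N : Set G) →
      ∃ x : G ⧸ N, Subgroup.map (MulAut.conj x).toMonoidHom
          (Subgroup.map (QuotientGroup.mk' N) C) = Subgroup.map (QuotientGroup.mk' N) D) :
    ∃ g : G, Subgroup.map (MulAut.conj g).toMonoidHom C = D := by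
  set t : OpenNormalSubgroup G → Set G :=
    fun N => {g | Subgroup.map (MulAut.conj g).toMonoidHom C ⊔ N.toSubgroup
      = D ⊔ N.toSubgroup} with ht
  -- quotient reformulation
  have quot_iff : ∀ (N : OpenNormalSubgroup G) (g : G),
      Subgroup.map (QuotientGroup.mk' N.toSubgroup)
          (Subgroup.map (MulAut.conj g).toMonoidHom C)
        = Subgroup.map (QuotientGroup.mk' N.toSubgroup) D ↔ g ∈ t N := by
    intro N g
    constructor
    · intro hmap
      have := congrArg (Subgroup.comap (QuotientGroup.mk' N.toSubgroup)) hmap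
      rwa [Subgroup.comap_map_eq, Subgroup.comap_map_eq, QuotientGroup.ker_mk'] at this
    · intro hg
      have h1 : Subgroup.map (QuotientGroup.mk' N.toSubgroup)
          (Subgroup.map (MulAut.conj g).toMonoidHom C ⊔ N.toSubgroup)
          = Subgroup.map (QuotientGroup.mk' N.toSubgroup) (D ⊔ N.toSubgroup) := by rw [hg]
      rwa [Subgroup.map_sup, Subgroup.map_sup,
        ((Subgroup.map_eq_bot_iff _).mpr (le_of_eq (QuotientGroup.ker_mk' N.toSubgroup).symm) :
          Subgroup.map (QuotientGroup.mk' N.toSubgroup) N.toSubgroup = ⊥),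
        sup_bot_eq, sup_bot_eq] at h1
  -- each t N is nonempty
  have htn : ∀ N, (t N).Nonempty := by
    intro N
    obtain ⟨x, hx⟩ := h N.toSubgroup N.isOpen'
    obtain ⟨g, rfl⟩ := QuotientGroup.mk'_surjective N.toSubgroup x
    refine ⟨g, (quot_iff N g).mp ?_⟩
    rw [← hx, Subgroup.map_map, Subgroup.map_map]
    congr 1
  -- t N is a union of cosets of N, hence clopen
  have hcoset : ∀ (N : OpenNormalSubgroup G) (g n : G), n ∈ N.toSubgroup →
      (g ∈ t N ↔ g * n ∈ t N) := by
    intro N g n hn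
    have : N.toSubgroup.Normal := N.isNormal'
    simp only [ht, Set.mem_setOf_eq, conj_coset_eq C N.toSubgroup g n hn]
  have htcl : ∀ N, IsClosed (t N) := by
    intro N
    rw [← isOpen_compl_iff]
    rw [isOpen_iff_forall_mem_open]
    intro g hg
    refine ⟨(fun x => g⁻¹ * x) ⁻¹' (N.toSubgroup : Set G), ?_, ?_, by simp [one_mem]⟩
    · intro y hy
      simp only [Set.mem_preimage, SetLike.mem_coe] at hy
      intro hyt
      exact hg (((hcoset N g _ hy).mpr (by simpa using hyt)))
    · exact N.isOpen'.preimage (by continuity)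
  -- directedness
  have hmono : ∀ (N M : OpenNormalSubgroup G), N.toSubgroup ≤ M.toSubgroup → t N ⊆ t M := by
    intro N M hNM g hg
    simp only [ht, Set.mem_setOf_eq] at hg ⊢
    have h1 := congrArg (· ⊔ M.toSubgroup) hg
    simpa [sup_assoc, sup_of_le_right hNM] using h1
  have htd : Directed (· ⊇ ·) t := by
    intro N M
    exact ⟨N ⊓ M, hmono _ _ inf_le_left, hmono _ _ inf_le_right⟩
  have : Nonempty (OpenNormalSubgroup G) := ⟨{ toOpenSubgroup := ⊤, isNormal' := by constructor; intro a _ g; trivial }⟩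
  obtain ⟨g, hg⟩ := IsCompact.nonempty_iInter_of_directed_nonempty_isCompact_isClosed t htd htn
    (fun N => (htcl N).isCompact) htcl
  simp only [Set.mem_iInter, ht, Set.mem_setOf_eq] at hg
  refine ⟨g, le_antisymm ?_ ?_⟩
  · intro x hx
    refine mem_of_forall_mem_sup D hD (fun N => ?_)
    rw [← hg N]
    exact Subgroup.mem_sup_left hx
  · intro x hx
    have hCg : IsClosed ((Subgroup.map (MulAut.conj g).toMonoidHom C : Set G)) := by
      have : (Subgroup.map (MulAut.conj g).toMonoidHom C : Set G)
          = (fun y => g⁻¹ * y * g) ⁻¹' (C : Set G) := by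
        ext y
        simp only [Set.mem_preimage, SetLike.mem_coe, Subgroup.mem_map]
        constructor
        · rintro ⟨c, hc, rfl⟩; simpa [MulAut.conj, mul_assoc] using hc
        · intro hy; exact ⟨g⁻¹ * y * g, hy, by simp [MulAut.conj]; group⟩
      rw [this]
      exact hC.preimage (by continuity)
    refine mem_of_forall_mem_sup _ hCg (fun N => ?_)
    rw [hg N]
    exact Subgroup.mem_sup_left hx
end

section
/- Let G be a profinite group. The canonical map from the set of conjugacy classes of closed subgroups of G to the inverse limit over open normal subgroups N of the sets of conjugacy classes of subgroups of the finite groups G/N is surjective: given for each open normal N a conjugacy class of a subgroup H_N ≤ G/N, compatible under the projection maps, there exists a closed subgroup H ≤ G with HN/N conjugate to H_N in G/N for every N. -/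
open CategoryTheory Subgroup

namespace Stmt4Aux

variable {G : Type*} [Group G]

lemma conjHom_comp {G' : Type*} [Group G'] (f : G →* G') (x : G) :
    f.comp (MulAut.conj x).toMonoidHom = (MulAut.conj (f x)).toMonoidHom.comp f := by
  ext g; simp [MulAut.conj]

lemma map_conj_map {G' : Type*} [Group G'] (f : G →* G') (x : G) (K : Subgroup G) :
    Subgroup.map f (Subgroup.map (MulAut.conj x).toMonoidHom K)
      = Subgroup.map (MulAut.conj (f x)).toMonoidHom (Subgroup.map f K) := by
  rw [Subgroup.map_map, Subgroup.map_map, conjHom_comp]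

lemma conj_conj (x y : G) (K : Subgroup G) :
    Subgroup.map (MulAut.conj x).toMonoidHom (Subgroup.map (MulAut.conj y).toMonoidHom K)
      = Subgroup.map (MulAut.conj (x * y)).toMonoidHom K := by
  rw [Subgroup.map_map]
  congr 1
  ext g
  simp [MulAut.conj, mul_assoc]

lemma conj_one (K : Subgroup G) :
    Subgroup.map (MulAut.conj (1 : G)).toMonoidHom K = K := by
  have : (MulAut.conj (1 : G)).toMonoidHom = MonoidHom.id G := by
    ext g; simp [MulAut.conj]
  rw [this, Subgroup.map_id]

lemma qmap_id (N : Subgroup G) [N.Normal] (h : N ≤ Subgroup.comap (MonoidHom.id G) N) :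
    QuotientGroup.map N N (MonoidHom.id G) h = MonoidHom.id _ := by
  ext q
  rfl

lemma qmap_comp (N N' N'' : Subgroup G) [N.Normal] [N'.Normal] [N''.Normal]
    (h1 : N ≤ Subgroup.comap (MonoidHom.id G) N')
    (h2 : N' ≤ Subgroup.comap (MonoidHom.id G) N'')
    (h12 : N ≤ Subgroup.comap (MonoidHom.id G) N'') :
    (QuotientGroup.map N' N'' (MonoidHom.id G) h2).comp
        (QuotientGroup.map N N' (MonoidHom.id G) h1)
      = QuotientGroup.map N N'' (MonoidHom.id G) h12 := by
  ext q
  rfl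

variable (G) in
/-- The index type of open normal subgroups, ordered by reverse inclusion. -/
def Idx [TopologicalSpace G] : Type _ := {N : Subgroup G // N.Normal ∧ IsOpen (N : Set G)}

variable [TopologicalSpace G]

instance : Preorder (Idx G) where
  le N M := M.1 ≤ N.1
  le_refl N := le_refl N.1
  le_trans a b c h1 h2 := le_trans (α := Subgroup G) h2 h1

lemma Idx.le_def {N M : Idx G} : N ≤ M ↔ M.1 ≤ N.1 := Iff.rfl

instance [ContinuousMul G] : IsDirected (Idx G) (· ≤ ·) :=
  ⟨fun N M => by
    haveI := N.2.1; haveI := M.2.1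
    refine ⟨⟨N.1 ⊓ M.1, inferInstance, by
      rw [Subgroup.coe_inf]; exact N.2.2.inter M.2.2⟩, ?_, ?_⟩
    · exact Idx.le_def.2 inf_le_left
    · exact Idx.le_def.2 inf_le_right⟩

lemma Idx.directed [ContinuousMul G] (M N : Idx G) :
    ∃ P : Idx G, P.1 ≤ M.1 ∧ P.1 ≤ N.1 := by
  haveI := M.2.1; haveI := N.2.1
  exact ⟨⟨M.1 ⊓ N.1, inferInstance, by
    rw [Subgroup.coe_inf]; exact M.2.2.inter N.2.2⟩, inf_le_left, inf_le_right⟩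

instance : Nonempty (Idx G) := ⟨⟨⊤, inferInstance, by rw [Subgroup.coe_top]; exact isOpen_univ⟩⟩

/-- The set of subgroups of `G ⧸ N` conjugate to `H N`. -/
def TT (H : ∀ (N : Subgroup G) [N.Normal], IsOpen (N : Set G) → Subgroup (G ⧸ N))
    (N : Idx G) : Type _ :=
  haveI := N.2.1
  {K : Subgroup (G ⧸ N.1) // ∃ x, Subgroup.map (MulAut.conj x).toMonoidHom K = H N.1 N.2.2}

variable (H : ∀ (N : Subgroup G) [N.Normal], IsOpen (N : Set G) → Subgroup (G ⧸ N))
    (hcompat : ∀ (N N' : Subgroup G) [N.Normal] [N'.Normal]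
      (hN : IsOpen (N : Set G)) (hN' : IsOpen (N' : Set G))
      (hle : N ≤ Subgroup.comap (MonoidHom.id G) N'),
      ∃ x : G ⧸ N', Subgroup.map (MulAut.conj x).toMonoidHom
          (Subgroup.map (QuotientGroup.map N N' (MonoidHom.id G) hle) (H N hN))
        = H N' hN')

/-- The inverse system of conjugates of the `H N`. -/
def Fct : (Idx G)ᵒᵖ ⥤ Type _ where
  obj N := TT H N.unop
  map {N M} f := TypeCat.ofHom fun K =>
    haveI := N.unop.2.1; haveI := M.unop.2.1
    have hle : N.unop.1 ≤ Subgroup.comap (MonoidHom.id G) M.unop.1 :=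
      fun g hg => (Idx.le_def.1 f.unop.le) hg
    ⟨Subgroup.map (QuotientGroup.map N.unop.1 M.unop.1 (MonoidHom.id G) hle) K.1, by
      obtain ⟨x, hx⟩ := K.2
      obtain ⟨z, hz⟩ := hcompat N.unop.1 M.unop.1 N.unop.2.2 M.unop.2.2 hle
      refine ⟨z * QuotientGroup.map N.unop.1 M.unop.1 (MonoidHom.id G) hle x, ?_⟩
      rw [← conj_conj, ← map_conj_map, hx, hz]⟩
  map_id N := by
    haveI := N.unop.2.1
    ext K
    apply Subtype.ext
    show Subgroup.map _ K.1 = K.1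
    exact (congrArg (fun φ => Subgroup.map φ K.1) (qmap_id _ _)).trans (Subgroup.map_id _)
  map_comp {N M P} f g := by
    haveI := N.unop.2.1; haveI := M.unop.2.1; haveI := P.unop.2.1
    ext K
    apply Subtype.ext
    show Subgroup.map _ K.1 = Subgroup.map _ (Subgroup.map _ K.1)
    rw [Subgroup.map_map]
    exact congrArg (fun φ => Subgroup.map φ K.1) (qmap_comp _ _ _ _ _ _).symm

lemma sec_compat (s : ∀ j : (Idx G)ᵒᵖ, (Fct H hcompat).obj j)
    (hs : s ∈ (Fct H hcompat).sections) (a b : Idx G) (h : a.1 ≤ b.1) :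
    haveI := a.2.1
    haveI := b.2.1
    Subgroup.map (QuotientGroup.map a.1 b.1 (MonoidHom.id G) (fun _ hg => h hg))
      (s (Opposite.op a)).1 = (s (Opposite.op b)).1 := by
  haveI := a.2.1; haveI := b.2.1
  have f : Opposite.op a ⟶ Opposite.op b := (homOfLE (Idx.le_def.2 h)).op
  have h2 := hs f
  exact congrArg Subtype.val h2

/-- The preimage in `G` of the chosen subgroup of `G ⧸ N`. -/
def KKs (s : ∀ j : (Idx G)ᵒᵖ, (Fct H hcompat).obj j) (N : Idx G) : Subgroup G :=
  haveI := N.2.1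
  Subgroup.comap (QuotientGroup.mk' N.1) (s (Opposite.op N)).1

lemma mem_KKs (s : ∀ j : (Idx G)ᵒᵖ, (Fct H hcompat).obj j) (N : Idx G) (g : G) :
    haveI := N.2.1
    (g ∈ KKs H hcompat s N ↔
      (QuotientGroup.mk g : G ⧸ N.1) ∈ (s (Opposite.op N)).1) := Iff.rfl

lemma KKs_mono (s : ∀ j : (Idx G)ᵒᵖ, (Fct H hcompat).obj j)
    (hs : s ∈ (Fct H hcompat).sections) (a b : Idx G) (h : a.1 ≤ b.1) :
    KKs H hcompat s a ≤ KKs H hcompat s b := by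
  haveI := a.2.1; haveI := b.2.1
  intro g hg
  rw [mem_KKs] at hg ⊢
  rw [← sec_compat H hcompat s hs a b h]
  exact ⟨QuotientGroup.mk g, hg, rfl⟩

lemma le_KKs (s : ∀ j : (Idx G)ᵒᵖ, (Fct H hcompat).obj j) (N : Idx G) :
    N.1 ≤ KKs H hcompat s N := by
  haveI := N.2.1
  intro g hg
  rw [mem_KKs]
  have h1 : (QuotientGroup.mk g : G ⧸ N.1) = 1 := (QuotientGroup.eq_one_iff g).2 hg
  rw [h1]
  exact one_mem _

lemma isClosed_KKs [ContinuousMul G] (s : ∀ j : (Idx G)ᵒᵖ, (Fct H hcompat).obj j) (N : Idx G) :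
    IsClosed ((KKs H hcompat s N : Subgroup G) : Set G) :=
  (KKs H hcompat s N).isClosed_of_isOpen
    (Subgroup.isOpen_mono (le_KKs H hcompat s N) N.2.2)

/-- The key claim: the image of `⨅ M, KKs M` in `G ⧸ N` is exactly the chosen subgroup. -/
lemma map_iInf_KKs [IsTopologicalGroup G] [CompactSpace G]
    (s : ∀ j : (Idx G)ᵒᵖ, (Fct H hcompat).obj j)
    (hs : s ∈ (Fct H hcompat).sections) (N : Idx G) :
    haveI := N.2.1
    Subgroup.map (QuotientGroup.mk' N.1) (⨅ M : Idx G, KKs H hcompat s M)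
      = (s (Opposite.op N)).1 := by
  haveI := N.2.1
  apply le_antisymm
  · rintro _ ⟨h, hh, rfl⟩
    have h1 : h ∈ KKs H hcompat s N := (iInf_le (KKs H hcompat s) N) hh
    exact (mem_KKs H hcompat s N h).1 h1
  · intro g hg
    set A : Idx G → Set G := fun M =>
      {h : G | h ∈ KKs H hcompat s M ∧ (QuotientGroup.mk h : G ⧸ N.1) = g} with hA
    have hAclosed : ∀ M, IsClosed (A M) := by
      intro M
      obtain ⟨g₀, rfl⟩ := QuotientGroup.mk_surjective g
      have h1 : IsClosed {h : G | (QuotientGroup.mk h : G ⧸ N.1) = QuotientGroup.mk g₀} := by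
        have h2 : {h : G | (QuotientGroup.mk h : G ⧸ N.1) = QuotientGroup.mk g₀}
            = (fun h : G => h⁻¹ * g₀) ⁻¹' (N.1 : Set G) := by
          ext h
          simp only [Set.mem_setOf_eq, Set.mem_preimage, SetLike.mem_coe]
          exact QuotientGroup.eq
        rw [h2]
        exact (N.1.isClosed_of_isOpen N.2.2).preimage
          ((continuous_inv.comp continuous_id).mul continuous_const)
      exact IsClosed.inter (isClosed_KKs H hcompat s M) h1
    have hAne : ∀ M, (A M).Nonempty := by
      intro M
      haveI := M.2.1
      obtain ⟨P, hPM, hPN⟩ := Idx.directed M N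
      haveI := P.2.1
      have h2 : g ∈ Subgroup.map
          (QuotientGroup.map P.1 N.1 (MonoidHom.id G) (fun _ hx => hPN hx))
          (s (Opposite.op P)).1 := by
        rw [sec_compat H hcompat s hs P N hPN]; exact hg
      obtain ⟨g', hg', hgg'⟩ := h2
      obtain ⟨h, rfl⟩ := QuotientGroup.mk_surjective g'
      refine ⟨h, ?_, ?_⟩
      · rw [mem_KKs, ← sec_compat H hcompat s hs P M hPM]
        exact ⟨QuotientGroup.mk h, hg', rfl⟩
      · rw [← hgg']; rfl
    have hAdir : Directed (· ⊇ ·) A := by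
      intro M₁ M₂
      obtain ⟨P, hP1, hP2⟩ := Idx.directed M₁ M₂
      exact ⟨P,
        fun h hh => ⟨KKs_mono H hcompat s hs P M₁ hP1 hh.1, hh.2⟩,
        fun h hh => ⟨KKs_mono H hcompat s hs P M₂ hP2 hh.1, hh.2⟩⟩
    obtain ⟨h, hh⟩ :=
      IsCompact.nonempty_iInter_of_directed_nonempty_isCompact_isClosed A hAdir hAne
        (fun M => (hAclosed M).isCompact) hAclosed
    simp only [Set.mem_iInter] at hh
    have hhH₀ : h ∈ ⨅ M : Idx G, KKs H hcompat s M := by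
      rw [Subgroup.mem_iInf]
      exact fun M => (hh M).1
    exact ⟨h, hhH₀, (hh N).2⟩

end Stmt4Aux

open Stmt4Aux Subgroup CategoryTheory

/-- Let `G` be a profinite group.  Suppose given, for each open normal subgroup `N` of
`G`, a subgroup `H N` of `G/N`, compatibly up to conjugacy: for `N ≤ N'` the image of
`H N` under `G/N → G/N'` is conjugate to `H N'` in `G/N'`.  Then there exists a closed
subgroup `H₀ ≤ G` whose image `H₀N/N` in `G/N` is conjugate to `H N` for every open
normal `N`.  (This is the surjectivity of the canonical map from conjugacy classes of
closed subgroups of `G` to the inverse limit of the sets of conjugacy classes of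
subgroups of the finite quotients `G/N`.) -/
theorem stmt_4 {G : Type*} [Group G] [TopologicalSpace G] [IsTopologicalGroup G]
    [CompactSpace G] [TotallyDisconnectedSpace G] [T2Space G]
    (H : ∀ (N : Subgroup G) [N.Normal], IsOpen (N : Set G) → Subgroup (G ⧸ N))
    (hcompat : ∀ (N N' : Subgroup G) [N.Normal] [N'.Normal]
      (hN : IsOpen (N : Set G)) (hN' : IsOpen (N' : Set G))
      (hle : N ≤ Subgroup.comap (MonoidHom.id G) N'),
      ∃ x : G ⧸ N', Subgroup.map (MulAut.conj x).toMonoidHom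
          (Subgroup.map (QuotientGroup.map N N' (MonoidHom.id G) hle) (H N hN))
        = H N' hN') :
    ∃ H₀ : Subgroup G, IsClosed (H₀ : Set G) ∧
      ∀ (N : Subgroup G) [N.Normal] (hN : IsOpen (N : Set G)),
        ∃ x : G ⧸ N, Subgroup.map (MulAut.conj x).toMonoidHom
            (Subgroup.map (QuotientGroup.mk' N) H₀) = H N hN := by
  haveI hfin : ∀ (N : (Idx G)ᵒᵖ), Finite ((Fct H hcompat).obj N) := by
    intro N
    haveI := N.unop.2.1
    haveI : Finite (G ⧸ N.unop.1) := N.unop.1.quotient_finite_of_isOpen N.unop.2.2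
    haveI : Finite (Subgroup (G ⧸ N.unop.1)) :=
      Finite.of_injective _ SetLike.coe_injective
    exact Subtype.finite
  haveI hne : ∀ (N : (Idx G)ᵒᵖ), Nonempty ((Fct H hcompat).obj N) := by
    intro N
    haveI := N.unop.2.1
    exact ⟨⟨H N.unop.1 N.unop.2.2, 1, conj_one _⟩⟩
  obtain ⟨s, hs⟩ := nonempty_sections_of_finite_inverse_system (Fct H hcompat)
  refine ⟨⨅ M : Idx G, KKs H hcompat s M, ?_, ?_⟩
  · rw [Subgroup.coe_iInf]
    exact isClosed_iInter fun M => isClosed_KKs H hcompat s M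
  · intro N _ hN
    set j : Idx G := ⟨N, ‹_›, hN⟩ with hj
    obtain ⟨x, hx⟩ := (s (Opposite.op j)).2
    refine ⟨x, ?_⟩
    have hmain := map_iInf_KKs H hcompat s hs j
    rw [show QuotientGroup.mk' N = QuotientGroup.mk' j.1 from rfl, hmain, hx]
end

section
/- Let X be the topological space on {m_i : i ∈ ℕ ∪ {∞}} ∪ {p_j : j ≥ 1} whose closed sets are the specialization-stable subsets that are finite or contain m_∞. Then a subset V ⊆ X is quasi-compact if and only if m_∞ ∈ V or V is finite. -/
/-!
Give `m i` height `i` and `p j` height `j - 1`. A specialization never lowers the height, so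
the sets `{n < height}` are closed (they contain `m ∞`), and their complements `{height ≤ n}`
are finite open neighbourhoods of every point other than `m ∞`; hence a compact set avoiding
`m ∞` is finite. Conversely an open set containing `m ∞` has a closed complement avoiding
`m ∞`, which must be finite, so every set containing `m ∞` is compact.
-/

open Topology

/-- The points of the space: `m i` for `i ∈ ℕ ∪ {∞}` and `p j` for `j ≥ 1`. -/
inductive Pt : Type where
  | m : ℕ∞ → Pt
  | p : ℕ+ → Pt

/-- Closed sets: specialization-stable subsets that are finite or contain `m ∞`. -/
def ClosedCond (Z : Set Pt) : Prop :=
  (∀ j : ℕ+, Pt.p j ∈ Z →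
      Pt.m (((j : ℕ) - 1 : ℕ) : ℕ∞) ∈ Z ∧ Pt.m ((j : ℕ) : ℕ∞) ∈ Z) ∧
  (Z.Finite ∨ Pt.m ⊤ ∈ Z)

open Filter Set

theorem IsCompact.finite_of_forall_exists_finite_mem_nhds {X : Type*} [TopologicalSpace X]
    {s : Set X} (hs : IsCompact s) (h : ∀ x ∈ s, ∃ U ∈ 𝓝 x, U.Finite) : s.Finite := by
  choose! U hU hUfin using h
  obtain ⟨t, hts, hst⟩ := hs.elim_nhds_subcover U hU
  exact (t.finite_toSet.biUnion fun x hx => hUfin x (hts x hx)).subset hst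

theorem isCompact_of_cofinite_le_nhds {X : Type*} [TopologicalSpace X] {s : Set X} {x : X}
    (hx : x ∈ s) (h : cofinite ≤ 𝓝 x) : IsCompact s := by
  have hs : Tendsto ((↑) : s → X) cofinite (𝓝 x) :=
    Subtype.val_injective.tendsto_cofinite.mono_right h
  simpa [Subtype.range_coe, insert_eq_of_mem hx] using hs.isCompact_insert_range_of_cofinite

namespace Pt

def height : Pt → ℕ∞
  | m i => i
  | p j => ((j : ℕ) - 1 : ℕ)

theorem finite_setOf_height_le (n : ℕ) : {x | height x ≤ n}.Finite := by
  refine ((finite_range fun k : Fin (n + 1) => m (k : ℕ)).union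
    (finite_range fun k : Fin (n + 1) => p (k : ℕ).succPNat)).subset ?_
  rintro (i | j) hx
  · obtain ⟨k, rfl, hk⟩ := ENat.le_natCast_iff.1 hx
    exact Or.inl ⟨⟨k, Nat.lt_succ_of_le hk⟩, rfl⟩
  · have hj : j.natPred ≤ n := by
      simp only [height, mem_ofPred_eq, Nat.cast_le] at hx
      exact hx
    exact Or.inr ⟨⟨j.natPred, Nat.lt_succ_of_le hj⟩, congrArg p j.succPNat_natPred⟩

theorem height_ne_top {x : Pt} (hx : x ≠ m ⊤) : height x ≠ ⊤ := by
  cases x with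
  | m i => exact fun h => hx (congrArg m h)
  | p j => exact ENat.natCast_ne_top _

theorem isOpen_setOf_height_le [TopologicalSpace Pt]
    (ht : ∀ Z : Set Pt, IsClosed Z ↔ ClosedCond Z) (n : ℕ) : IsOpen {x | height x ≤ n} := by
  refine isClosed_compl_iff.1 ((ht _).2 ⟨fun j hj => ?_, Or.inr ?_⟩)
  · simp only [mem_compl_iff, mem_ofPred_eq, not_le, height] at hj ⊢
    exact ⟨hj, hj.trans_le (by gcongr; omega)⟩
  · simp [height]

theorem exists_finite_mem_nhds [TopologicalSpace Pt]
    (ht : ∀ Z : Set Pt, IsClosed Z ↔ ClosedCond Z) {x : Pt} (hx : x ≠ m ⊤) :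
    ∃ U ∈ 𝓝 x, U.Finite := by
  lift height x to ℕ using height_ne_top hx with n hn
  exact ⟨_, (isOpen_setOf_height_le ht n).mem_nhds hn.ge, finite_setOf_height_le n⟩

theorem cofinite_le_nhds_m_top [TopologicalSpace Pt]
    (ht : ∀ Z : Set Pt, IsClosed Z ↔ ClosedCond Z) : cofinite ≤ 𝓝 (m ⊤) := by
  intro U hU
  obtain ⟨W, hWU, hW, hmW⟩ := mem_nhds_iff.1 hU
  have hWc : (Wᶜ).Finite := ((ht _).1 hW.isClosed_compl).2.resolve_right (· hmW)
  exact hWc.subset (compl_subset_compl.2 hWU)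

end Pt

/-- A subset `V` is quasi-compact if and only if `m ∞ ∈ V` or `V` is finite. -/
theorem stmt_7 [t : TopologicalSpace Pt]
    (ht : ∀ Z : Set Pt, IsClosed Z ↔ ClosedCond Z) :
    ∀ V : Set Pt, IsCompact V ↔ (Pt.m ⊤ ∈ V ∨ V.Finite) := by
  intro V
  refine ⟨fun hV => or_iff_not_imp_left.2 fun hm => ?_, ?_⟩
  · exact hV.finite_of_forall_exists_finite_mem_nhds fun x hx =>
      Pt.exists_finite_mem_nhds ht (ne_of_mem_of_not_mem hx hm)
  · rintro (hm | hfin)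
    · exact isCompact_of_cofinite_le_nhds hm (Pt.cofinite_le_nhds_m_top ht)
    · exact hfin.isCompact
end

section
/- Let X be the topological space on {m_i : i ∈ ℕ ∪ {∞}} ∪ {p_j : j ≥ 1} whose closed sets are the specialization-stable subsets that are finite or contain m_∞. Then X is not a noetherian topological space; specifically, the open subset X \ {m_∞} is not quasi-compact. -/
namespace Pt

def tail (n : ℕ) : Set Pt := fun x =>
  match x with
  | .m i => (n : ℕ∞) ≤ i
  | .p j => n < (j : ℕ)

@[simp] lemma m_mem_tail {n : ℕ} {i : ℕ∞} : m i ∈ tail n ↔ (n : ℕ∞) ≤ i := Iff.rfl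

@[simp] lemma p_mem_tail {n : ℕ} {j : ℕ+} : p j ∈ tail n ↔ n < (j : ℕ) := Iff.rfl

lemma antitone_tail : Antitone tail := by
  intro k n hkn x hx
  cases x with
  | m i => exact le_trans (by exact_mod_cast hkn) (m_mem_tail.mp hx)
  | p j => exact lt_of_le_of_lt hkn hx

lemma closedCond_tail (n : ℕ) : ClosedCond (tail n) := by
  refine ⟨fun j hj => ?_, Or.inr (by simp)⟩
  rw [p_mem_tail] at hj
  simp only [m_mem_tail, Nat.cast_le]
  omega

lemma closedCond_singleton_top : ClosedCond {m ⊤} :=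
  ⟨fun _ h => absurd h (by simp), Or.inr rfl⟩

lemma compl_singleton_top_subset_iUnion_compl_tail :
    ({m ⊤}ᶜ : Set Pt) ⊆ ⋃ n, (tail n)ᶜ := by
  intro x hx
  rw [Set.mem_iUnion]
  cases x with
  | m i =>
    lift i to ℕ using by simpa using hx
    exact ⟨i + 1, by simpa using ENat.natCast_lt_natCast.mpr i.lt_succ_self⟩
  | p j => exact ⟨j, by simp⟩

end Pt

/-- `X` is not noetherian; specifically the open set `X \ {m ∞}` is not quasi-compact. -/
theorem stmt_8 [t : TopologicalSpace Pt]
    (ht : ∀ Z : Set Pt, IsClosed Z ↔ ClosedCond Z) :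
    ¬ TopologicalSpace.NoetherianSpace Pt ∧
    (IsOpen ({Pt.m ⊤}ᶜ : Set Pt) ∧ ¬ IsCompact ({Pt.m ⊤}ᶜ : Set Pt)) := by
  have hopen : IsOpen ({Pt.m ⊤}ᶜ : Set Pt) :=
    isOpen_compl_iff.mpr ((ht _).mpr Pt.closedCond_singleton_top)
  have hncomp : ¬ IsCompact ({Pt.m ⊤}ᶜ : Set Pt) := by
    intro hc
    obtain ⟨n, hn⟩ := hc.elim_directed_cover (fun n => (Pt.tail n)ᶜ)
      (fun n => ((ht _).mpr (Pt.closedCond_tail n)).isOpen_compl)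
      Pt.compl_singleton_top_subset_iUnion_compl_tail
      (Monotone.directed_le fun _ _ h => Set.compl_subset_compl.mpr (Pt.antitone_tail h))
    exact hn (show Pt.m n ≠ Pt.m ⊤ by simp) (by simp)
  exact ⟨fun _ => hncomp (TopologicalSpace.NoetherianSpace.isCompact _), hopen, hncomp⟩
end

section
/- Let X be the topological space on {m_i : i ∈ ℕ ∪ {∞}} ∪ {p_j : j ≥ 1} whose closed sets are the specialization-stable subsets that are finite or contain m_∞. Then the generalization closure of every point of X is finite; explicitly, the set of generalizations of m_0 is {m_0, p_1}, of m_n for 1 ≤ n < ∞ is {p_n, m_n, p_{n+1}}, of p_j is {p_j}, and of m_∞ is {m_∞}. -/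
open Topology

/-! Every finite specialization-stable set is closed, so the closure of a point is the smallest
such set: `{m i}` for `m i`, and `{p j, m (j - 1), m j}` for `p j`. The generalizations of each
point are read off from these closures. -/

namespace Pt

section

variable [TopologicalSpace Pt] (ht : ∀ Z : Set Pt, IsClosed Z ↔ ClosedCond Z)
include ht

theorem closure_singleton_m (i : ℕ∞) : closure ({m i} : Set Pt) = {m i} := by
  refine ((ht _).2 ⟨?_, .inl (Set.finite_singleton _)⟩).closure_eq
  intro j hj
  simp at hj

theorem closure_singleton_p (j : ℕ+) :
    closure ({p j} : Set Pt) = {p j, m (((j : ℕ) - 1 : ℕ) : ℕ∞), m ((j : ℕ) : ℕ∞)} := by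
  apply subset_antisymm
  · refine closure_minimal (by simp) ((ht _).2 ⟨?_, .inl (Set.toFinite _)⟩)
    intro j' hj'
    obtain rfl : j' = j := by simpa using hj'
    simp
  · have hm := ((ht _).1 isClosed_closure).1 j (subset_closure (Set.mem_singleton _))
    rintro x (rfl | rfl | rfl)
    exacts [subset_closure rfl, hm.1, hm.2]

theorem m_specializes_iff {i : ℕ∞} {x : Pt} : m i ⤳ x ↔ x = m i := by
  rw [specializes_iff_mem_closure, closure_singleton_m ht, Set.mem_singleton_iff]

theorem p_specializes_iff {j : ℕ+} {x : Pt} :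
    p j ⤳ x ↔ x = p j ∨ x = m (((j : ℕ) - 1 : ℕ) : ℕ∞) ∨ x = m ((j : ℕ) : ℕ∞) := by
  rw [specializes_iff_mem_closure, closure_singleton_p ht]
  rfl

theorem setOf_specializes_m_zero : {y : Pt | y ⤳ m 0} = {m 0, p 1} := by
  ext (i | j)
  · simp [m_specializes_iff ht, eq_comm]
  · have := j.pos
    simp only [p_specializes_iff ht, Set.mem_ofPred_eq, Set.mem_insert_iff,
      Set.mem_singleton_iff, m.injEq, p.injEq, reduceCtorEq, false_or, @eq_comm ℕ∞ 0,
      Nat.cast_eq_zero, ← PNat.coe_inj, PNat.one_coe]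
    omega

theorem setOf_specializes_m_pnat (n : ℕ+) :
    {y : Pt | y ⤳ m ((n : ℕ) : ℕ∞)} = {p n, m ((n : ℕ) : ℕ∞), p (n + 1)} := by
  ext (i | j)
  · simp [m_specializes_iff ht, eq_comm]
  · have := j.pos
    simp only [p_specializes_iff ht, Set.mem_ofPred_eq, Set.mem_insert_iff,
      Set.mem_singleton_iff, m.injEq, p.injEq, reduceCtorEq, false_or, eq_comm,
      Nat.cast_inj, ← PNat.coe_inj, PNat.add_coe, PNat.one_coe]
    omega

theorem setOf_specializes_p (j : ℕ+) : {y : Pt | y ⤳ p j} = {p j} := by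
  ext (i | j')
  · simp [m_specializes_iff ht]
  · simp [p_specializes_iff ht, eq_comm]

theorem setOf_specializes_m_top : {y : Pt | y ⤳ m ⊤} = {m ⊤} := by
  ext (i | j)
  · simp [m_specializes_iff ht, eq_comm]
  · simp [p_specializes_iff ht, eq_comm]

theorem finite_setOf_specializes (x : Pt) : {y : Pt | y ⤳ x}.Finite := by
  rcases x with i | j
  · induction i using ENat.recTopCoe with
    | top => simp [setOf_specializes_m_top ht]
    | coe n =>
      rcases n with _ | n
      · simp [setOf_specializes_m_zero ht]
      · exact setOf_specializes_m_pnat ht n.succPNat ▸ Set.toFinite _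
  · simp [setOf_specializes_p ht]

end

end Pt

open Pt in
/-- The generalization closure of every point is finite, and is computed explicitly:
generalizations of `m 0` are `{m 0, p 1}`, of `m n` (for `1 ≤ n < ∞`) are
`{p n, m n, p (n+1)}`, of `p j` are `{p j}`, and of `m ∞` are `{m ∞}`.
(`y ⤳ x` means that `y` specializes to `x`, i.e. `y` is a generalization of... rather,
`x ∈ closure {y}`, so `{y | y ⤳ x}` is the set of generalizations of `x`.) -/
theorem stmt_9 [t : TopologicalSpace Pt]
    (ht : ∀ Z : Set Pt, IsClosed Z ↔ ClosedCond Z) :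
    (∀ x : Pt, {y : Pt | y ⤳ x}.Finite) ∧
    ({y : Pt | y ⤳ Pt.m 0} = {Pt.m 0, Pt.p 1}) ∧
    (∀ n : ℕ+, {y : Pt | y ⤳ Pt.m ((n : ℕ) : ℕ∞)} =
      {Pt.p n, Pt.m ((n : ℕ) : ℕ∞), Pt.p (n + 1)}) ∧
    (∀ j : ℕ+, {y : Pt | y ⤳ Pt.p j} = {Pt.p j}) ∧
    ({y : Pt | y ⤳ Pt.m ⊤} = {Pt.m ⊤}) :=
  ⟨finite_setOf_specializes ht, setOf_specializes_m_zero ht, setOf_specializes_m_pnat ht,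
    setOf_specializes_p ht, setOf_specializes_m_top ht⟩
end

section
/- Let X be the topological space on {m_i : i ∈ ℕ ∪ {∞}} ∪ {p_j : j ≥ 1} whose closed sets are the specialization-stable subsets that are finite or contain m_∞. Then every point x ∈ X is weakly visible: there exist a Thomason subset V and a Thomason subset W of X such that {x} = V ∩ (X \ W). -/
open Topology

/-- A Thomason subset: a union of closed subsets each with quasi-compact open complement. -/
def IsThomason {α : Type*} [TopologicalSpace α] (V : Set α) : Prop :=
  ∃ S : Set (Set α), V = ⋃₀ S ∧ ∀ Z ∈ S, IsClosed Z ∧ IsCompact Zᶜ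

/-!
Every open neighbourhood of `m ∞` is cofinite, so every set containing `m ∞` is quasi-compact.
Hence `{m i}` (`i < ∞`) and `{p j}ᶜ` are closed with quasi-compact complement, and `{m ∞}ᶜ` is
the union of the closures of the other points, none of which contains `m ∞`.
-/

open Filter Set

section Thomason

variable {X : Type*} [TopologicalSpace X]

theorem isCompact_of_mem_of_cofinite_le_nhds {a : X} (ha : cofinite ≤ 𝓝 a) {A : Set X}
    (hA : a ∈ A) : IsCompact A := by
  have hval : Tendsto ((↑) : A → X) cofinite (𝓝 a) :=
    Subtype.val_injective.tendsto_cofinite.mono_right ha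
  simpa [insert_eq_of_mem hA] using hval.isCompact_insert_range_of_cofinite

theorem IsClosed.isThomason {Z : Set X} (hZ : IsClosed Z) (hc : IsCompact Zᶜ) :
    IsThomason Z :=
  ⟨{Z}, (sUnion_singleton Z).symm, by simpa using ⟨hZ, hc⟩⟩

theorem isThomason_univ : IsThomason (univ : Set X) :=
  isClosed_univ.isThomason (by simp)

theorem isThomason_empty : IsThomason (∅ : Set X) :=
  ⟨∅, by simp, by simp⟩

theorem isThomason_compl_singleton {a : X} (ha : cofinite ≤ 𝓝 a)
    (hcl : ∀ x ≠ a, a ∉ closure {x}) : IsThomason ({a}ᶜ : Set X) := by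
  refine ⟨(fun x => closure {x}) '' {a}ᶜ, ?_, ?_⟩
  · ext y
    simp only [sUnion_image, mem_iUnion, mem_compl_singleton_iff, exists_prop]
    refine ⟨fun hy => ⟨y, hy, subset_closure rfl⟩, ?_⟩
    rintro ⟨x, hx, hyx⟩ rfl
    exact hcl x hx hyx
  · rintro _ ⟨x, hx, rfl⟩
    exact ⟨isClosed_closure, isCompact_of_mem_of_cofinite_le_nhds ha (hcl x hx)⟩

end Thomason

namespace Pt

variable [TopologicalSpace Pt]

theorem cofinite_le_nhds_top (ht : ∀ Z : Set Pt, IsClosed Z ↔ ClosedCond Z) :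
    cofinite ≤ 𝓝 (m ⊤) := by
  refine (nhds_basis_opens _).ge_iff.mpr fun U ⟨hmU, hU⟩ => ?_
  rcases ((ht _).mp hU.isClosed_compl).2 with hfin | hmem
  · exact hfin
  · exact absurd hmU hmem

theorem isClosed_singleton_m (ht : ∀ Z : Set Pt, IsClosed Z ↔ ClosedCond Z) (k : ℕ) :
    IsClosed {m k} :=
  (ht _).mpr ⟨by simp, .inl (finite_singleton _)⟩

theorem isClosed_compl_singleton_p (ht : ∀ Z : Set Pt, IsClosed Z ↔ ClosedCond Z) (j : ℕ+) :
    IsClosed ({p j}ᶜ : Set Pt) :=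
  (ht _).mpr ⟨by simp, .inr (by simp)⟩

theorem isClosed_insert_p (ht : ∀ Z : Set Pt, IsClosed Z ↔ ClosedCond Z) (j : ℕ+) :
    IsClosed ({p j, m ((j : ℕ) - 1 : ℕ), m (j : ℕ)} : Set Pt) :=
  (ht _).mpr ⟨by simp, .inl (toFinite _)⟩

theorem top_notMem_closure (ht : ∀ Z : Set Pt, IsClosed Z ↔ ClosedCond Z) :
    ∀ x ≠ m ⊤, m ⊤ ∉ closure {x}
  | m i, hi => by
    induction i using ENat.recTopCoe with
    | top => exact absurd rfl hi
    | coe k => simp [(isClosed_singleton_m ht k).closure_eq]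
  | p j, _ => fun hmem => by
    have := closure_minimal (by simp) (isClosed_insert_p ht j) hmem
    simp only [mem_insert_iff, mem_singleton_iff, m.injEq, reduceCtorEq, ENat.top_ne_natCast,
      or_self] at this

end Pt

open Pt in
/-- Every point `x` is weakly visible: `{x} = V ∩ (X \ W)` for Thomason subsets `V`, `W`. -/
theorem stmt_10 [t : TopologicalSpace Pt]
    (ht : ∀ Z : Set Pt, IsClosed Z ↔ ClosedCond Z) :
    ∀ x : Pt, ∃ V W : Set Pt, IsThomason V ∧ IsThomason W ∧ ({x} : Set Pt) = V ∩ Wᶜ := by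
  rintro (i | j)
  · induction i using ENat.recTopCoe with
    | top =>
      exact ⟨univ, {m ⊤}ᶜ, isThomason_univ,
        isThomason_compl_singleton (cofinite_le_nhds_top ht) (top_notMem_closure ht), by simp⟩
    | coe k =>
      exact ⟨{m k}, ∅, (isClosed_singleton_m ht k).isThomason
        (isCompact_of_mem_of_cofinite_le_nhds (cofinite_le_nhds_top ht) (by simp)),
        isThomason_empty, by simp⟩
  · exact ⟨univ, {p j}ᶜ, isThomason_univ,
      (isClosed_compl_singleton_p ht j).isThomason (by simp), by simp⟩
end

section
/- Let X be the topological space on {m_i : i ∈ ℕ ∪ {∞}} ∪ {p_j : j ≥ 1} whose closed sets are the specialization-stable subsets that are finite or contain m_∞. Then a subset V ⊆ X is Thomason if and only if (i) V is stable under specialization (p_j ∈ V implies m_{j-1}, m_j ∈ V) and (ii) m_∞ ∈ V implies V is cofinite in X. -/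
open Topology

section aux

variable [t : TopologicalSpace Pt] (ht : ∀ Z : Set Pt, IsClosed Z ↔ ClosedCond Z)

set_option linter.unusedSectionVars false
include ht

/-- Any set containing `m ∞` is compact. -/
lemma compact_of_top_mem {K : Set Pt} (hK : Pt.m ⊤ ∈ K) : IsCompact K := by
  classical
  apply isCompact_of_finite_subcover
  intro ι U hU hcov
  obtain ⟨i₀, hi₀⟩ := Set.mem_iUnion.mp (hcov hK)
  have hclosed : IsClosed (U i₀)ᶜ := (hU i₀).isClosed_compl
  have hcc := (ht _).mp hclosed
  have hfin : ((U i₀)ᶜ).Finite := by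
    rcases hcc.2 with h | h
    · exact h
    · exact absurd hi₀ h
  have hfin2 : (K \ U i₀).Finite := hfin.subset (fun x hx => hx.2)
  -- choose an index for each leftover point
  have hchoice : ∀ x ∈ K \ U i₀, ∃ i, x ∈ U i := by
    intro x hx
    exact Set.mem_iUnion.mp (hcov hx.1)
  choose f hf using hchoice
  refine ⟨insert i₀ (hfin2.toFinset.attach.image
    (fun x => f x.1 (hfin2.mem_toFinset.mp x.2))), ?_⟩
  intro x hx
  by_cases hxU : x ∈ U i₀
  · exact Set.mem_biUnion (Finset.mem_insert_self _ _) hxU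
  · have hxd : x ∈ K \ U i₀ := ⟨hx, hxU⟩
    refine Set.mem_biUnion ?_ (hf x hxd)
    apply Finset.mem_insert_of_mem
    exact Finset.mem_image.mpr ⟨⟨x, hfin2.mem_toFinset.mpr hxd⟩, Finset.mem_attach _ _, rfl⟩

/-- The basic open neighborhoods used in the cover. -/
def nbhd : Pt → Set Pt
  | Pt.p j => {Pt.p j}
  | Pt.m ⊤ => ∅
  | Pt.m (i : ℕ) =>
      {Pt.m (i : ℕ∞)} ∪ {x | ∃ j : ℕ+, x = Pt.p j ∧ ((j : ℕ) = i ∨ (j : ℕ) = i + 1)}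

lemma nbhd_finite (x : Pt) : (nbhd x).Finite := by
  match x with
  | Pt.p j => exact Set.finite_singleton _
  | Pt.m ⊤ => exact Set.finite_empty
  | Pt.m (i : ℕ) =>
      apply Set.Finite.union (Set.finite_singleton _)
      have h1 : ({i, i + 1} : Set ℕ).Finite := (Set.finite_singleton _).insert _
      have h2 := h1.preimage (f := fun j : ℕ+ => (j : ℕ))
        (Set.injOn_of_injective PNat.coe_injective)
      apply (h2.image Pt.p).subset
      rintro x ⟨j, rfl, hj⟩
      exact ⟨j, by simpa using hj, rfl⟩

lemma nbhd_open (x : Pt) : IsOpen (nbhd x) := by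
  rw [← isClosed_compl_iff, ht]
  match x with
  | Pt.p j =>
      constructor
      · intro k hk
        constructor <;> simp [nbhd]
      · right; simp [nbhd]
  | Pt.m ⊤ =>
      constructor
      · intro k hk; constructor <;> simp [nbhd] <;> intro h <;> exact h
      · right; simp [nbhd]; intro h; exact h
  | Pt.m (i : ℕ) =>
      constructor
      · intro k hk
        simp only [nbhd, Set.mem_compl_iff, Set.mem_union, Set.mem_singleton_iff,
          Set.mem_setOf_eq, not_or, not_exists] at hk ⊢
        obtain ⟨hk1, hk2⟩ := hk
        have hk3 : ¬ ((k : ℕ) = i ∨ (k : ℕ) = i + 1) := by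
          intro h
          exact (hk2 k) ⟨rfl, h⟩
        push_neg at hk3
        constructor
        · constructor
          · intro h
            injection h with h'
            have : (k : ℕ) - 1 = i := by exact_mod_cast h'
            have := k.2
            omega
          · intro j ⟨hj, _⟩; exact absurd hj (by simp)
        · constructor
          · intro h
            injection h with h'
            have : (k : ℕ) = i := by exact_mod_cast h'
            omega
          · intro j ⟨hj, _⟩; exact absurd hj (by simp)
      · right
        simp only [nbhd, Set.mem_compl_iff, Set.mem_union, Set.mem_singleton_iff,
          Set.mem_setOf_eq, not_or, not_exists]
        constructor
        · intro h
          injection h with h'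
          exact WithTop.coe_ne_top h'.symm
        · intro j ⟨hj, _⟩; exact absurd hj (by simp)

lemma mem_nbhd {x : Pt} (hx : x ≠ Pt.m ⊤) : x ∈ nbhd x := by
  match x with
  | Pt.p j => simp [nbhd]
  | Pt.m ⊤ => exact absurd rfl hx
  | Pt.m (i : ℕ) => left; rfl

/-- A compact set not containing `m ∞` is finite. -/
lemma finite_of_compact {K : Set Pt} (hK : IsCompact K) (h : Pt.m ⊤ ∉ K) : K.Finite := by
  obtain ⟨s, hs⟩ := hK.elim_finite_subcover nbhd (nbhd_open ht) (by
    intro x hx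
    exact Set.mem_iUnion.mpr ⟨x, mem_nbhd ht (by rintro rfl; exact h hx)⟩)
  exact (s.finite_toSet.biUnion (fun x _ => nbhd_finite ht x)).subset hs

/-- The closure-like closed set attached to a point. -/
def cl : Pt → Set Pt
  | Pt.m i => {Pt.m i}
  | Pt.p j => {Pt.p j, Pt.m (((j : ℕ) - 1 : ℕ) : ℕ∞), Pt.m ((j : ℕ) : ℕ∞)}

lemma mem_cl (x : Pt) : x ∈ cl x := by
  match x with
  | Pt.m i => rfl
  | Pt.p j => left; rfl

lemma cl_closed (x : Pt) : IsClosed (cl x) := by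
  rw [ht]
  match x with
  | Pt.m i =>
      refine ⟨?_, Or.inl (Set.finite_singleton _)⟩
      intro j hj
      simp [cl] at hj
  | Pt.p j =>
      refine ⟨?_, Or.inl (by simp [cl])⟩
      intro k hk
      simp only [cl, Set.mem_insert_iff, Set.mem_singleton_iff] at hk
      rcases hk with hk | hk | hk
      · injection hk with hk'
        subst hk'
        exact ⟨Or.inr (Or.inl rfl), Or.inr (Or.inr rfl)⟩
      all_goals exact absurd hk (by simp)

lemma top_not_mem_cl {x : Pt} (hx : x ≠ Pt.m ⊤) : Pt.m ⊤ ∉ cl x := by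
  match x with
  | Pt.m i =>
      intro h
      simp only [cl, Set.mem_singleton_iff] at h
      injection h with h'
      exact hx (by rw [h'])
  | Pt.p j =>
      intro h
      simp only [cl, Set.mem_insert_iff, Set.mem_singleton_iff] at h
      rcases h with h | h | h
      · exact absurd h (by simp)
      · injection h with h'
        exact (WithTop.coe_ne_top (a := ((j : ℕ) - 1 : ℕ))) h'.symm
      · injection h with h'
        exact (WithTop.coe_ne_top (a := ((j : ℕ) : ℕ))) h'.symm

end aux

/-- `V` is Thomason iff `V` is specialization-stable and, if `m ∞ ∈ V`, `V` is cofinite. -/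
theorem stmt_11 [t : TopologicalSpace Pt]
    (ht : ∀ Z : Set Pt, IsClosed Z ↔ ClosedCond Z) :
    ∀ V : Set Pt, IsThomason V ↔
      ((∀ j : ℕ+, Pt.p j ∈ V →
          Pt.m (((j : ℕ) - 1 : ℕ) : ℕ∞) ∈ V ∧ Pt.m ((j : ℕ) : ℕ∞) ∈ V) ∧
        (Pt.m ⊤ ∈ V → Vᶜ.Finite)) := by
  intro V
  constructor
  · rintro ⟨S, rfl, hS⟩
    constructor
    · intro j hj
      obtain ⟨Z, hZS, hjZ⟩ := hj
      have hcc := (ht Z).mp (hS Z hZS).1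
      obtain ⟨h1, h2⟩ := hcc.1 j hjZ
      exact ⟨⟨Z, hZS, h1⟩, ⟨Z, hZS, h2⟩⟩
    · intro hm
      obtain ⟨Z, hZS, hmZ⟩ := hm
      have hZc : IsCompact Zᶜ := (hS Z hZS).2
      have hZcfin : Zᶜ.Finite := finite_of_compact ht hZc (by simp [hmZ])
      exact hZcfin.subset (Set.compl_subset_compl.mpr (Set.subset_sUnion_of_mem hZS))
  · rintro ⟨hspec, hcof⟩
    by_cases hm : Pt.m ⊤ ∈ V
    · refine ⟨{V}, (Set.sUnion_singleton V).symm, ?_⟩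
      intro Z hZ
      have hZV : Z = V := hZ
      rw [hZV]
      exact ⟨(ht V).mpr ⟨hspec, Or.inr hm⟩, (hcof hm).isCompact⟩
    · refine ⟨cl '' V, ?_, ?_⟩
      · apply Set.Subset.antisymm
        · intro x hx
          exact ⟨cl x, ⟨x, hx, rfl⟩, mem_cl ht x⟩
        · rintro x ⟨Z, ⟨y, hy, rfl⟩, hx⟩
          match y with
          | Pt.m i =>
              simp only [cl, Set.mem_singleton_iff] at hx
              rwa [hx]
          | Pt.p j =>
              simp only [cl, Set.mem_insert_iff, Set.mem_singleton_iff] at hx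
              rcases hx with rfl | rfl | rfl
              · exact hy
              · exact (hspec j hy).1
              · exact (hspec j hy).2
      · rintro Z ⟨y, hy, rfl⟩
        have hy' : y ≠ Pt.m ⊤ := by rintro rfl; exact hm hy
        exact ⟨cl_closed ht y, compact_of_top_mem ht (top_not_mem_cl ht hy')⟩
end

section
/- Let X be the topological space on {m_i : i ∈ ℕ ∪ {∞}} ∪ {p_j : j ≥ 1} whose closed sets are the specialization-stable subsets that are finite or contain m_∞. Then X is a spectral space: X is quasi-compact, sober, and its quasi-compact open subsets form a basis closed under finite intersections. -/
open Topology

namespace PtAux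

variable {t : TopologicalSpace Pt}

lemma open_iff (ht : ∀ Z : Set Pt, IsClosed Z ↔ ClosedCond Z) (U : Set Pt) :
    IsOpen U ↔ ClosedCond Uᶜ := by
  rw [← isClosed_compl_iff, ht]

lemma mem_p_of_open (ht : ∀ Z : Set Pt, IsClosed Z ↔ ClosedCond Z) {U : Set Pt}
    (hU : IsOpen U) (j : ℕ+)
    (h : Pt.m (((j : ℕ) - 1 : ℕ) : ℕ∞) ∈ U ∨ Pt.m ((j : ℕ) : ℕ∞) ∈ U) :
    Pt.p j ∈ U := by
  by_contra hp
  rcases ((open_iff ht U).1 hU).1 j hp with ⟨h1, h2⟩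
  rcases h with h | h
  · exact h1 h
  · exact h2 h

lemma cofinite_of_open (ht : ∀ Z : Set Pt, IsClosed Z ↔ ClosedCond Z) {U : Set Pt}
    (hU : IsOpen U) (hm : Pt.m ⊤ ∈ U) : Uᶜ.Finite := by
  rcases ((open_iff ht U).1 hU).2 with h | h
  · exact h
  · exact absurd hm h

lemma isOpen_singleton_p (ht : ∀ Z : Set Pt, IsClosed Z ↔ ClosedCond Z) (j : ℕ+) :
    IsOpen ({Pt.p j} : Set Pt) := by
  rw [open_iff ht]
  refine ⟨fun j' _ => ⟨by simp, by simp⟩, Or.inr (by simp)⟩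

/-- Minimal open neighborhood of `m i` for finite `i`. -/
def N (i : ℕ) : Set Pt :=
  {x | x = Pt.m (i : ℕ∞) ∨ ∃ j : ℕ+, ((j : ℕ) = i ∨ (j : ℕ) = i + 1) ∧ x = Pt.p j}

lemma mem_N (i : ℕ) : Pt.m (i : ℕ∞) ∈ N i := Or.inl rfl

lemma N_finite (i : ℕ) : (N i).Finite := by
  have h1 : N i ⊆ {Pt.m (i : ℕ∞)} ∪ Pt.p '' ((fun j : ℕ+ => (j : ℕ)) ⁻¹' {i, i + 1}) := by
    rintro x (rfl | ⟨j, hj, rfl⟩)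
    · exact Or.inl rfl
    · exact Or.inr ⟨j, by simpa using hj, rfl⟩
  have h2 : ((fun j : ℕ+ => (j : ℕ)) ⁻¹' {i, i + 1}).Finite :=
    Set.Finite.preimage (fun a _ b _ h => PNat.coe_injective h)
      (by simp : ({i, i + 1} : Set ℕ).Finite)
  exact Set.Finite.subset ((Set.finite_singleton _).union (h2.image _)) h1

lemma isOpen_N (ht : ∀ Z : Set Pt, IsClosed Z ↔ ClosedCond Z) (i : ℕ) : IsOpen (N i) := by
  rw [open_iff ht]
  constructor
  · intro j hj
    constructor
    · intro hmem
      rcases hmem with h | ⟨j', _, h⟩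
      · apply hj
        injection h with h'
        have h2 : (j : ℕ) - 1 = i := Nat.cast_inj.mp h'
        have h3 := j.pos
        refine Or.inr ⟨j, Or.inr ?_, rfl⟩
        omega
      · exact absurd h (by simp)
    · intro hmem
      rcases hmem with h | ⟨j', _, h⟩
      · apply hj
        injection h with h'
        exact Or.inr ⟨j, Or.inl (Nat.cast_inj.mp h'), rfl⟩
      · exact absurd h (by simp)
  · refine Or.inr ?_
    rintro (h | ⟨j, _, h⟩)
    · simp at h
    · simp at h

lemma N_subset (ht : ∀ Z : Set Pt, IsClosed Z ↔ ClosedCond Z) {U : Set Pt}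
    (hU : IsOpen U) {i : ℕ} (hm : Pt.m (i : ℕ∞) ∈ U) : N i ⊆ U := by
  rintro x (rfl | ⟨j, hj, rfl⟩)
  · exact hm
  · rcases hj with hj | hj
    · exact mem_p_of_open ht hU j (Or.inr (by rw [hj]; exact hm))
    · exact mem_p_of_open ht hU j (Or.inl (by rw [hj]; simpa using hm))

lemma isCompact_of_mem_top (ht : ∀ Z : Set Pt, IsClosed Z ↔ ClosedCond Z) {U : Set Pt}
    (hU : IsOpen U) (hm : Pt.m ⊤ ∈ U) : IsCompact U := by
  classical
  refine isCompact_of_finite_subcover ?_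
  intro ι V hV hsub
  obtain ⟨i₀, hi₀⟩ := Set.mem_iUnion.1 (hsub hm)
  have hfin : (U \ V i₀).Finite :=
    (cofinite_of_open ht (hV i₀) hi₀).subset (fun x hx => hx.2)
  have hchoice : ∀ x : Pt, ∃ i : ι, x ∈ U → x ∈ V i := by
    intro x
    by_cases hx : x ∈ U
    · obtain ⟨i, hi⟩ := Set.mem_iUnion.1 (hsub hx)
      exact ⟨i, fun _ => hi⟩
    · exact ⟨i₀, fun h => absurd h hx⟩
  choose g hg using hchoice
  refine ⟨insert i₀ (hfin.toFinset.image g), fun x hx => ?_⟩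
  by_cases hxV : x ∈ V i₀
  · exact Set.mem_biUnion (Finset.mem_insert_self _ _) hxV
  · refine Set.mem_biUnion (Finset.mem_insert_of_mem ?_) (hg x hx)
    exact Finset.mem_image_of_mem g (hfin.mem_toFinset.2 ⟨hx, hxV⟩)

lemma finite_of_compact_open (ht : ∀ Z : Set Pt, IsClosed Z ↔ ClosedCond Z) {U : Set Pt}
    (hc : IsCompact U) (hm : Pt.m ⊤ ∉ U) : U.Finite := by
  classical
  set W : Pt → Set Pt := fun x =>
    match x with
    | Pt.p j => {Pt.p j}
    | Pt.m i => N i.toNat with hW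
  have hWopen : ∀ x, IsOpen (W x) := by
    rintro (i | j)
    · exact isOpen_N ht _
    · exact isOpen_singleton_p ht _
  have hWfin : ∀ x, (W x).Finite := by
    rintro (i | j)
    · exact N_finite _
    · exact Set.finite_singleton _
  have hsub : U ⊆ ⋃ x : Pt, W x := by
    rintro x hx
    refine Set.mem_iUnion.2 ⟨x, ?_⟩
    rcases x with i | j
    · have hi : i ≠ ⊤ := fun h => hm (h ▸ hx)
      have : ((i.toNat : ℕ) : ℕ∞) = i := ENat.coe_toNat hi
      show Pt.m i ∈ N i.toNat
      rw [← this]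
      exact mem_N _
    · exact rfl
  obtain ⟨s, hs⟩ := hc.elim_finite_subcover W hWopen hsub
  exact Set.Finite.subset (s.finite_toSet.biUnion fun x _ => hWfin x) hs

lemma isClosed_singleton_m (ht : ∀ Z : Set Pt, IsClosed Z ↔ ClosedCond Z) (i : ℕ∞) :
    IsClosed ({Pt.m i} : Set Pt) := by
  rw [ht]
  exact ⟨fun j h => absurd h (by simp), Or.inl (Set.finite_singleton _)⟩

/-- The closure of `{p j}`. -/
def T (j : ℕ+) : Set Pt :=
  {Pt.p j, Pt.m (((j : ℕ) - 1 : ℕ) : ℕ∞), Pt.m ((j : ℕ) : ℕ∞)}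

lemma isClosed_T (ht : ∀ Z : Set Pt, IsClosed Z ↔ ClosedCond Z) (j : ℕ+) : IsClosed (T j) := by
  rw [ht]
  constructor
  · intro j' hj'
    rcases hj' with h | h | h
    · have : j' = j := by simpa using h
      subst this
      exact ⟨Or.inr (Or.inl rfl), Or.inr (Or.inr rfl)⟩
    · exact absurd h (by simp)
    · exact absurd h (by simp)
  · exact Or.inl ((Set.finite_singleton _).insert _ |>.insert _)

lemma closure_p (ht : ∀ Z : Set Pt, IsClosed Z ↔ ClosedCond Z) (j : ℕ+) :
    closure ({Pt.p j} : Set Pt) = T j := by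
  apply subset_antisymm
  · exact closure_minimal (by intro x hx; rw [hx]; exact Or.inl rfl) (isClosed_T ht j)
  · have hcl : IsClosed (closure ({Pt.p j} : Set Pt)) := isClosed_closure
    have hp : Pt.p j ∈ closure ({Pt.p j} : Set Pt) := subset_closure rfl
    rcases ((ht _).1 hcl).1 j hp with ⟨h1, h2⟩
    rintro x (rfl | rfl | rfl)
    · exact hp
    · exact h1
    · exact h2

lemma closed_diff_p (ht : ∀ Z : Set Pt, IsClosed Z ↔ ClosedCond Z) {Z : Set Pt}
    (hZ : IsClosed Z) (j : ℕ+) : IsClosed (Z \ {Pt.p j}) := by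
  rw [ht] at hZ ⊢
  constructor
  · intro j' hj'
    rcases hZ.1 j' hj'.1 with ⟨h1, h2⟩
    exact ⟨⟨h1, by simp⟩, ⟨h2, by simp⟩⟩
  · rcases hZ.2 with h | h
    · exact Or.inl (h.subset (Set.diff_subset))
    · exact Or.inr ⟨h, by simp⟩

lemma closed_diff_m (ht : ∀ Z : Set Pt, IsClosed Z ↔ ClosedCond Z) {Z : Set Pt}
    (hZ : IsClosed Z) (hnp : ∀ j : ℕ+, Pt.p j ∉ Z) {b : ℕ∞} (hb : b ≠ ⊤) :
    IsClosed (Z \ {Pt.m b}) := by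
  rw [ht]
  constructor
  · intro j hj
    exact absurd hj.1 (hnp j)
  · rcases ((ht Z).1 hZ).2 with h | h
    · exact Or.inl (h.subset (Set.diff_subset))
    · exact Or.inr ⟨h, by simp [hb.symm]⟩

end PtAux

open PtAux

/-- The space is spectral: quasi-compact, sober, and the quasi-compact open subsets
form a basis that is stable under finite intersections. -/
theorem stmt_12 [t : TopologicalSpace Pt]
    (ht : ∀ Z : Set Pt, IsClosed Z ↔ ClosedCond Z) :
    CompactSpace Pt ∧ T0Space Pt ∧ QuasiSober Pt ∧
    TopologicalSpace.IsTopologicalBasis {U : Set Pt | IsOpen U ∧ IsCompact U} ∧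
    (∀ U V : Set Pt, IsOpen U → IsCompact U → IsOpen V → IsCompact V →
      IsOpen (U ∩ V) ∧ IsCompact (U ∩ V)) := by
  have hsep : ∀ x y : Pt, Inseparable x y → x = y := by
    have key : ∀ (i : ℕ∞) (y : Pt), i ≠ ⊤ → Inseparable (Pt.m i) y → Pt.m i = y := by
      intro i y hi h
      have h1 : Pt.m i ∈ N i.toNat := by
        have : ((i.toNat : ℕ) : ℕ∞) = i := ENat.coe_toNat hi
        rw [← this]; exact mem_N _
      have h2 : y ∈ N i.toNat := (h.mem_open_iff (isOpen_N ht _)).1 h1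
      rcases h2 with h2 | ⟨j, _, rfl⟩
      · rw [h2, ENat.coe_toNat hi]
      · exact absurd ((h.mem_open_iff (isOpen_singleton_p ht j)).2 rfl) (by simp)
    intro x y h
    rcases x with i | j
    · rcases y with i' | j'
      · by_cases hi : i = ⊤
        · by_cases hi' : i' = ⊤
          · rw [hi, hi']
          · exact ((key i' _ hi' h.symm)).symm
        · exact key i _ hi h
      · exact absurd ((h.mem_open_iff (isOpen_singleton_p ht j')).2 rfl) (by simp)
    · have := (h.mem_open_iff (isOpen_singleton_p ht j)).1 rfl
      exact this.symm
  have hT0 : T0Space Pt := ⟨hsep⟩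
  have hunion : ∀ (S A B : Set Pt), IsIrreducible S → IsClosed A → IsClosed B →
      S ⊆ A ∪ B → S ⊆ A ∨ S ⊆ B := by
    intro S A B hirr hA hB hsub
    exact (isPreirreducible_iff_isClosed_union_isClosed.1 hirr.2) A B hA hB hsub
  refine ⟨⟨isCompact_of_mem_top ht isOpen_univ (Set.mem_univ _)⟩, hT0, ?_, ?_, ?_⟩
  · -- QuasiSober
    refine ⟨fun {S} hirr hcl => ?_⟩
    by_cases hp : ∃ j : ℕ+, Pt.p j ∈ S
    · obtain ⟨j, hj⟩ := hp
      have hTS : T j ⊆ S := by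
        rcases ((ht S).1 hcl).1 j hj with ⟨h1, h2⟩
        rintro x (rfl | rfl | rfl)
        · exact hj
        · exact h1
        · exact h2
      have hST : S ⊆ T j := by
        have hcov : S ⊆ T j ∪ (S \ {Pt.p j}) := by
          intro x hx
          by_cases hxp : x = Pt.p j
          · exact Or.inl (Or.inl hxp)
          · exact Or.inr ⟨hx, hxp⟩
        rcases hunion S (T j) (S \ {Pt.p j}) hirr (isClosed_T ht j)
          (closed_diff_p ht hcl j) hcov with h | h
        · exact h
        · exact (((h hj).2) rfl).elim
      exact ⟨Pt.p j, (closure_p ht j).trans (subset_antisymm hTS hST)⟩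
    · push_neg at hp
      have hsing : ∀ x ∈ S, ∀ y ∈ S, x = y := by
        intro x hx y hy
        by_contra hxy
        rcases x with a | ja; swap
        · exact hp ja hx
        rcases y with b | jb; swap
        · exact hp jb hy
        -- both m's, distinct; one of a b ≠ ⊤
        have hab : a ≠ b := fun h => hxy (by rw [h])
        -- wlog via helper
        have main : ∀ a b : ℕ∞, a ≠ b → b ≠ ⊤ → Pt.m a ∈ S → Pt.m b ∈ S → False := by
          intro a b hab hb hxa hxb
          have hcov : S ⊆ (S \ {Pt.m b}) ∪ {Pt.m b} := by
            intro z hz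
            by_cases hzb : z = Pt.m b
            · exact Or.inr hzb
            · exact Or.inl ⟨hz, hzb⟩
          rcases hunion S (S \ {Pt.m b}) {Pt.m b} hirr
            (closed_diff_m ht hcl hp hb) (isClosed_singleton_m ht b) hcov with h | h
          · exact (h hxb).2 rfl
          · have h2 := h hxa
            simp only [Set.mem_singleton_iff] at h2
            exact hab (by injection h2)
        by_cases hb : b = ⊤
        · have ha : a ≠ ⊤ := fun h => hab (h.trans hb.symm)
          exact main b a (Ne.symm hab) ha hy hx
        · exact main a b hab hb hx hy
      obtain ⟨x, hx⟩ := hirr.1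
      have hxm : ∃ i : ℕ∞, x = Pt.m i := by
        rcases x with i | j
        · exact ⟨i, rfl⟩
        · exact absurd hx (hp j)
      obtain ⟨i, rfl⟩ := hxm
      refine ⟨Pt.m i, ?_⟩
      have hSx : S = {Pt.m i} := by
        apply subset_antisymm
        · intro y hy; exact hsing y hy _ hx
        · intro y hy; rw [hy]; exact hx
      rw [hSx]
      exact (isClosed_singleton_m ht i).closure_eq
  · -- basis
    refine TopologicalSpace.isTopologicalBasis_of_isOpen_of_nhds (fun u hu => hu.1) ?_
    intro a U haU hU
    rcases a with i | j
    · by_cases hi : i = ⊤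
      · exact ⟨U, ⟨hU, isCompact_of_mem_top ht hU (hi ▸ haU)⟩, haU, subset_rfl⟩
      · have hcast : ((i.toNat : ℕ) : ℕ∞) = i := ENat.coe_toNat hi
        refine ⟨N i.toNat, ⟨isOpen_N ht _, (N_finite _).isCompact⟩, ?_, ?_⟩
        · rw [← hcast]; exact mem_N _
        · exact N_subset ht hU (by rw [hcast]; exact haU)
    · exact ⟨{Pt.p j}, ⟨isOpen_singleton_p ht j, (Set.finite_singleton _).isCompact⟩,
        rfl, Set.singleton_subset_iff.2 haU⟩
  · -- intersections
    intro U V hU hUc hV hVc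
    refine ⟨hU.inter hV, ?_⟩
    by_cases hm : Pt.m ⊤ ∈ U ∩ V
    · exact isCompact_of_mem_top ht (hU.inter hV) hm
    · have hfin : (U ∩ V).Finite := by
        rcases (not_and_or.1 (by simpa using hm)) with h | h
        · exact (finite_of_compact_open ht hUc h).subset Set.inter_subset_left
        · exact (finite_of_compact_open ht hVc h).subset Set.inter_subset_right
      exact hfin.isCompact
end

section
/- For each n ≥ 0, let W^n be the finite topological space on {m_0, p_1, m_1, p_2, ..., p_n, m_n} whose closed sets are the down-sets for the specialization order in which each p_j specializes to m_{j-1} and m_j (i.e. Z closed iff p_j ∈ Z implies m_{j-1}, m_j ∈ Z). Define π : W^{n+1} → W^n by π(m_i) = m_i and π(p_j) = p_j for i, j ≤ n, and π(p_{n+1}) = π(m_{n+1}) = m_n. Then π is a continuous closed surjection with finite fibers, and the inverse limit of the system (W^n, π) is homeomorphic to the space X on {m_i : i ∈ ℕ ∪ {∞}} ∪ {p_j : j ≥ 1} whose closed sets are the specialization-stable subsets that are finite or contain m_∞. -/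
open Topology

/-- Points `m i` (`i : ℕ`) and `p j` (`j ≥ 1`) of the finite approximations. -/
inductive FPt : Type where
  | m : ℕ → FPt
  | p : ℕ+ → FPt

/-- The index of a point, used to cut out the finite spaces `W n`. -/
def FPt.idx : FPt → ℕ
  | .m i => i
  | .p j => j

/-- The finite space `W n` on `{m 0, p 1, m 1, …, p n, m n}`. -/
abbrev W (n : ℕ) : Type := {x : FPt // x.idx ≤ n}

/-- Closed sets of `W n`: down-sets for the specialization order in which each `p j`
specializes to `m (j-1)` and `m j`. -/
def WClosedCond (n : ℕ) (Z : Set (W n)) : Prop :=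
  ∀ (j : ℕ+) (hj : (FPt.p j).idx ≤ n), (⟨FPt.p j, hj⟩ : W n) ∈ Z →
    (⟨FPt.m ((j : ℕ) - 1), le_trans (Nat.sub_le _ _) hj⟩ : W n) ∈ Z ∧
    (⟨FPt.m (j : ℕ), hj⟩ : W n) ∈ Z

/-- The transition map `π : W (n+1) → W n`, identity on `W n` and sending
`p (n+1)` and `m (n+1)` to `m n`. -/
def projW (n : ℕ) : W (n + 1) → W n := fun x =>
  match x with
  | ⟨.m i, _⟩ => if h : i ≤ n then ⟨.m i, h⟩ else ⟨.m n, le_refl n⟩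
  | ⟨.p j, _⟩ => if h : (j : ℕ) ≤ n then ⟨.p j, h⟩ else ⟨.m n, le_refl n⟩

/-- The inverse limit of the tower `(W n, projW)`. -/
abbrev Wlim : Type := {u : ∀ n, W n // ∀ n, projW n (u (n + 1)) = u n}

def trunc (n : ℕ) : Pt → W n
  | .m none => ⟨.m n, le_refl n⟩
  | .m (some i) => if h : i ≤ n then ⟨.m i, h⟩ else ⟨.m n, le_refl n⟩
  | .p j => if h : (j : ℕ) ≤ n then ⟨.p j, h⟩ else ⟨.m n, le_refl n⟩

lemma trunc_top (n : ℕ) : trunc n (.m ⊤) = ⟨.m n, le_refl n⟩ := rfl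

lemma trunc_m_le {i n : ℕ} (h : i ≤ n) : trunc n (.m i) = ⟨.m i, h⟩ := by
  show trunc n (.m (some i)) = _
  simp [trunc, h]

lemma trunc_m_gt {i n : ℕ} (h : ¬ i ≤ n) : trunc n (.m i) = ⟨.m n, le_refl n⟩ := by
  show trunc n (.m (some i)) = _
  simp [trunc, h]

lemma trunc_p_le {j : ℕ+} {n : ℕ} (h : (j:ℕ) ≤ n) : trunc n (.p j) = ⟨.p j, h⟩ := by
  simp [trunc, h]

lemma trunc_p_gt {j : ℕ+} {n : ℕ} (h : ¬ (j:ℕ) ≤ n) : trunc n (.p j) = ⟨.m n, le_refl n⟩ := by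
  simp [trunc, h]

lemma projW_m {n i : ℕ} (hi : i ≤ n + 1) :
    projW n ⟨.m i, hi⟩ = if h : i ≤ n then ⟨.m i, h⟩ else ⟨.m n, le_refl n⟩ := rfl

lemma projW_p {n : ℕ} {j : ℕ+} (hj : (FPt.p j).idx ≤ n + 1) :
    projW n ⟨.p j, hj⟩ = if h : (j:ℕ) ≤ n then ⟨.p j, h⟩ else ⟨.m n, le_refl n⟩ := rfl

lemma projW_trunc (n : ℕ) (x : Pt) : projW n (trunc (n+1) x) = trunc n x := by
  cases x with
  | m i =>
    cases i with
    | top => rw [trunc_top, trunc_top, projW_m]; simp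
    | coe i =>
      by_cases h : i ≤ n
      · rw [trunc_m_le (le_trans h (Nat.le_succ n)), trunc_m_le h, projW_m]
        simp [h]
      · by_cases h' : i ≤ n + 1
        · rw [trunc_m_le h', trunc_m_gt h, projW_m]
          simp [h]
        · rw [trunc_m_gt h', trunc_m_gt h, projW_m]
          simp
  | p j =>
    by_cases h : (j:ℕ) ≤ n
    · erw [trunc_p_le (le_trans h (Nat.le_succ n)), trunc_p_le h, projW_p]
      simp [h]
    · by_cases h' : (j:ℕ) ≤ n + 1
      · erw [trunc_p_le h', trunc_p_gt h, projW_p]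
        simp [h]
      · rw [trunc_p_gt h', trunc_p_gt h, projW_m]
        simp

/-- The candidate homeomorphism as a function. -/
def phi (x : Pt) : Wlim := ⟨fun n => trunc n x, fun n => projW_trunc n x⟩

lemma eNat_coe (i : ℕ) : ((i : ℕ∞)) = WithTop.some i := rfl

lemma phi_injective : Function.Injective phi := by
  intro x y h
  have h' : ∀ n, trunc n x = trunc n y := fun n => congrFun (congrArg Subtype.val h) n
  cases x with
  | m i =>
    cases y with
    | m i' =>
      cases i with
      | top =>
        cases i' with
        | top => rfl
        | coe i' =>
          have := h' (i' + 1)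
          rw [trunc_top, trunc_m_le (Nat.le_succ i')] at this
          simp [Subtype.ext_iff] at this
      | coe i =>
        cases i' with
        | top =>
          have := h' (i + 1)
          rw [trunc_top, trunc_m_le (Nat.le_succ i)] at this
          simp [Subtype.ext_iff] at this
        | coe i' =>
          have := h' (max i i')
          rw [trunc_m_le (le_max_left i i'), trunc_m_le (le_max_right i i')] at this
          simp [Subtype.ext_iff] at this
          exact congrArg (fun k => Pt.m (k : ℕ)) this
    | p j =>
      cases i with
      | top =>
        have := h' (j : ℕ)
        rw [trunc_top, trunc_p_le (le_refl _)] at this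
        simp [Subtype.ext_iff] at this
      | coe i =>
        have := h' (max i (j:ℕ))
        rw [trunc_m_le (le_max_left _ _), trunc_p_le (le_max_right _ _)] at this
        simp [Subtype.ext_iff] at this
  | p j =>
    cases y with
    | m i =>
      cases i with
      | top =>
        have := h' (j : ℕ)
        rw [trunc_top, trunc_p_le (le_refl _)] at this
        simp [Subtype.ext_iff] at this
      | coe i =>
        have := h' (max i (j:ℕ))
        rw [trunc_m_le (le_max_left _ _), trunc_p_le (le_max_right _ _)] at this
        simp [Subtype.ext_iff] at this
    | p j' =>
      have := h' (max (j:ℕ) (j':ℕ))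
      rw [trunc_p_le (le_max_left _ _), trunc_p_le (le_max_right _ _)] at this
      simp [Subtype.ext_iff] at this
      exact congrArg Pt.p this

lemma stab (u : ∀ n, W n) (hu : ∀ n, projW n (u (n+1)) = u n) {n : ℕ}
    (h : (u n).val ≠ .m n) :
    u (n+1) = ⟨(u n).val, le_trans (u n).prop (Nat.le_succ n)⟩ := by
  have hc := hu n
  rcases hw : u (n+1) with ⟨v, hv⟩
  rw [hw] at hc
  apply Subtype.ext
  show v = (u n).val
  cases v with
  | m i =>
    by_cases hi : i ≤ n
    · erw [projW_m, dif_pos hi] at hc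
      rw [← hc]
    · erw [projW_m, dif_neg hi] at hc
      exact absurd (by rw [← hc]) h
  | p j =>
    by_cases hj : (j:ℕ) ≤ n
    · rw [projW_p, dif_pos hj] at hc
      rw [← hc]
    · rw [projW_p, dif_neg hj] at hc
      exact absurd (by rw [← hc]) h

lemma stab_all (u : ∀ n, W n) (hu : ∀ n, projW n (u (n+1)) = u n) {N : ℕ}
    (h : (u N).val ≠ .m N) :
    ∀ k, u (N + k) = ⟨(u N).val, le_trans (u N).prop (Nat.le_add_right N k)⟩ := by
  intro k
  induction k with
  | zero => rfl
  | succ k ih =>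
    have hk : (u (N+k)).val ≠ .m (N+k) := by
      rw [ih]
      intro hcon
      have hle : ((u N).val).idx ≤ N := (u N).prop
      rw [hcon] at hle
      simp [FPt.idx] at hle
      have hk0 : k = 0 := by omega
      subst hk0
      exact h (by simpa using hcon)
    have hs := stab u hu hk
    exact hs.trans (Subtype.ext (show (u (N+k)).val = (u N).val from congrArg Subtype.val ih))

lemma down_eq (u v : ∀ n, W n) (hu : ∀ n, projW n (u (n+1)) = u n)
    (hv : ∀ n, projW n (v (n+1)) = v n) {N : ℕ} (h : u N = v N) :
    ∀ k, u (N - k) = v (N - k) := by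
  intro k
  induction k with
  | zero => simpa using h
  | succ k ih =>
    by_cases hk : k < N
    · have he : N - k = (N - (k+1)) + 1 := by omega
      rw [he] at ih
      rw [← hu, ← hv, ih]
    · have he : N - (k+1) = N - k := by omega
      rw [he]; exact ih

lemma eq_of_eventually (u v : Wlim) (N : ℕ) (h : ∀ k, u.1 (N + k) = v.1 (N + k)) : u = v := by
  apply Subtype.ext; funext n
  have hM : u.1 (max n N) = v.1 (max n N) := by
    have := h (max n N - N)
    rwa [Nat.add_sub_cancel' (le_max_right n N)] at this
  have hd := down_eq u.1 v.1 u.2 v.2 hM (max n N - n)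
  rwa [Nat.sub_sub_self (le_max_left n N)] at hd

lemma phi_surjective : Function.Surjective phi := by
  intro u
  by_cases h : ∀ n, (u.1 n).val = .m n
  · refine ⟨.m ⊤, ?_⟩
    apply Subtype.ext; funext n
    apply Subtype.ext
    show (trunc n (.m ⊤)).val = (u.1 n).val
    rw [trunc_top, h n]
  · push_neg at h
    obtain ⟨N, hN⟩ := h
    cases hval : (u.1 N).val with
    | m i =>
      have hi : i ≤ N := by
        have := (u.1 N).prop
        rw [hval] at this
        exact this
      refine ⟨.m (i : ℕ∞), eq_of_eventually _ u N fun k => ?_⟩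
      show trunc (N + k) (.m (i : ℕ∞)) = u.1 (N + k)
      rw [trunc_m_le (le_trans hi (Nat.le_add_right N k)), stab_all u.1 u.2 hN k]
      exact Subtype.ext hval.symm
    | p j =>
      have hj : (j:ℕ) ≤ N := by
        have := (u.1 N).prop
        rw [hval] at this
        exact this
      refine ⟨.p j, eq_of_eventually _ u N fun k => ?_⟩
      show trunc (N + k) (.p j) = u.1 (N + k)
      rw [trunc_p_le (le_trans hj (Nat.le_add_right N k)), stab_all u.1 u.2 hN k]
      exact Subtype.ext hval.symm

lemma phi_bijective : Function.Bijective phi := ⟨phi_injective, phi_surjective⟩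

lemma trunc_m_ge {i n : ℕ} (h : n ≤ i) : trunc n (.m i) = ⟨.m n, le_refl n⟩ := by
  by_cases h' : i ≤ n
  · rw [trunc_m_le h']
    exact Subtype.ext (congrArg FPt.m (le_antisymm h' h))
  · exact trunc_m_gt h'

lemma trunc_eq_p {n : ℕ} {j : ℕ+} (hj : (j:ℕ) ≤ n) {z : Pt}
    (h : (trunc n z).val = .p j) : z = .p j := by
  cases z with
  | m i =>
    cases i with
    | top => rw [trunc_top] at h; exact absurd h (by simp)
    | coe i =>
      by_cases hi : i ≤ n
      · rw [trunc_m_le hi] at h; exact absurd h (by simp)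
      · rw [trunc_m_gt hi] at h; exact absurd h (by simp)
  | p j' =>
    by_cases hj' : (j':ℕ) ≤ n
    · rw [trunc_p_le hj'] at h
      simp at h
      rw [h]
    · rw [trunc_p_gt hj'] at h; exact absurd h (by simp)

lemma trunc_eq_m_lt {n i : ℕ} (hi : i < n) {z : Pt}
    (h : (trunc n z).val = .m i) : z = .m (i : ℕ∞) := by
  cases z with
  | m i' =>
    cases i' with
    | top =>
      rw [trunc_top] at h
      simp at h
      omega
    | coe i' =>
      by_cases hi' : i' ≤ n
      · rw [trunc_m_le hi'] at h
        simp at h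
        rw [h]
      · rw [trunc_m_gt hi'] at h
        simp at h
        omega
  | p j =>
    by_cases hj : (j:ℕ) ≤ n
    · rw [trunc_p_le hj] at h; exact absurd h (by simp)
    · rw [trunc_p_gt hj] at h
      simp at h
      omega

/-- index function on `Pt` used for bounding finite sets -/
def Pt.idx : Pt → ℕ
  | .m none => 0
  | .m (some i) => i
  | .p j => j

lemma trunc_of_lt_idx {n : ℕ} {z : Pt} (hz : z ≠ .m ⊤) (hn : Pt.idx z < n)
    {x : Pt} (h : trunc n x = trunc n z) : x = z := by
  cases z with
  | m i =>
    cases i with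
    | top => exact absurd rfl hz
    | coe i =>
      have hi : i < n := hn
      rw [trunc_m_le hi.le] at h
      exact trunc_eq_m_lt hi (congrArg Subtype.val h)
  | p j =>
    have hj : (j:ℕ) ≤ n := le_of_lt hn
    rw [trunc_p_le hj] at h
    exact trunc_eq_p hj (congrArg Subtype.val h)

lemma pnat_sub_le {j : ℕ+} {n : ℕ} (h : (j:ℕ) ≤ n) : (j:ℕ) - 1 ≤ n := le_trans (Nat.sub_le _ _) h

/-- image of a specialization-stable set is closed in `W n` -/
lemma WClosed_image {Z : Set Pt}
    (hZ : ∀ j : ℕ+, Pt.p j ∈ Z →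
      Pt.m (((j : ℕ) - 1 : ℕ) : ℕ∞) ∈ Z ∧ Pt.m ((j : ℕ) : ℕ∞) ∈ Z) (n : ℕ) :
    WClosedCond n (trunc n '' Z) := by
  intro j hj hmem
  obtain ⟨z, hz, hzt⟩ := hmem
  have hzp : z = .p j := trunc_eq_p hj (congrArg Subtype.val hzt)
  subst hzp
  obtain ⟨h1, h2⟩ := hZ j hz
  constructor
  · exact ⟨_, h1, trunc_m_le (pnat_sub_le hj)⟩
  · exact ⟨_, h2, trunc_m_le hj⟩

/-- preimage under `trunc n` of a `WClosedCond` set is `ClosedCond` -/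
lemma closedCond_preimage (n : ℕ) (Z : Set (W n)) (hZ : WClosedCond n Z) :
    ClosedCond (trunc n ⁻¹' Z) := by
  constructor
  · intro j hj
    by_cases hjn : (j:ℕ) ≤ n
    · rw [Set.mem_preimage, trunc_p_le hjn] at hj
      obtain ⟨h1, h2⟩ := hZ j hjn hj
      constructor
      · rw [Set.mem_preimage, trunc_m_le (pnat_sub_le hjn)]
        exact h1
      · rw [Set.mem_preimage, trunc_m_le hjn]
        exact h2
    · rw [Set.mem_preimage, trunc_p_gt hjn] at hj
      constructor
      · rw [Set.mem_preimage, trunc_m_ge (by omega : n ≤ (j:ℕ) - 1)]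
        exact hj
      · rw [Set.mem_preimage, trunc_m_ge (by omega : n ≤ (j:ℕ))]
        exact hj
  · by_cases hm : (⟨.m n, le_refl n⟩ : W n) ∈ Z
    · right
      rw [Set.mem_preimage, trunc_top]
      exact hm
    · left
      have hsub : trunc n ⁻¹' Z ⊆
          (fun i : ℕ => Pt.m (i : ℕ∞)) '' (Set.Iic n) ∪ Pt.p '' {j : ℕ+ | (j:ℕ) ≤ n} := by
        intro x hx
        rw [Set.mem_preimage] at hx
        cases x with
        | m i =>
          cases i with
          | top => rw [trunc_top] at hx; exact absurd hx hm
          | coe i =>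
            by_cases hi : i ≤ n
            · exact Or.inl ⟨i, hi, rfl⟩
            · rw [trunc_m_gt hi] at hx; exact absurd hx hm
        | p j =>
          by_cases hj : (j:ℕ) ≤ n
          · exact Or.inr ⟨j, hj, rfl⟩
          · rw [trunc_p_gt hj] at hx; exact absurd hx hm
      refine Set.Finite.subset (Set.Finite.union (Set.Finite.image _ (Set.finite_Iic n))
        (Set.Finite.image _ ?_)) hsub
      exact Set.Finite.preimage (Set.injOn_of_injective (fun a b h => PNat.coe_injective h))
        (Set.finite_Iic n)

/-- the key image formula -/
lemma phi_image (Z : Set Pt) (hZ : ClosedCond Z) :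
    phi '' Z = ⋂ n, (fun u : Wlim => u.1 n) ⁻¹' (trunc n '' Z) := by
  ext u
  simp only [Set.mem_iInter, Set.mem_preimage]
  constructor
  · rintro ⟨x, hx, rfl⟩ n
    exact ⟨x, hx, rfl⟩
  · intro h
    obtain ⟨x, rfl⟩ := phi_surjective u
    refine ⟨x, ?_, rfl⟩
    by_cases hx : x = Pt.m ⊤
    · subst hx
      rcases hZ.2 with hfin | htop
      · obtain ⟨B, hB⟩ := (hfin.image Pt.idx).bddAbove
        obtain ⟨z, hz, hzt⟩ := h (B + 1)
        have hzt' : trunc (B+1) z = ⟨.m (B+1), le_refl _⟩ := hzt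
        cases z with
        | m i =>
          cases i with
          | top => exact hz
          | coe i =>
            exfalso
            have hb : i ≤ B := hB ⟨Pt.m (i:ℕ∞), hz, rfl⟩
            rw [trunc_m_le (by omega : i ≤ B+1)] at hzt'
            simp [Subtype.ext_iff] at hzt'
            omega
        | p j =>
          exfalso
          have hb : (j:ℕ) ≤ B := hB ⟨Pt.p j, hz, rfl⟩
          rw [trunc_p_le (by omega : (j:ℕ) ≤ B+1)] at hzt'
          simp [Subtype.ext_iff] at hzt'
      · exact htop
    · obtain ⟨z, hz, hzt⟩ := h (Pt.idx x + 1)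
      have hzt' : trunc (Pt.idx x + 1) z = trunc (Pt.idx x + 1) x := hzt
      by_cases hzm : z = Pt.m ⊤
      · exfalso
        subst hzm
        rw [trunc_top] at hzt'
        apply hx
        cases x with
        | m i =>
          cases i with
          | top => rfl
          | coe i =>
            exfalso
            have : Pt.idx (Pt.m (i:ℕ∞)) = i := rfl
            rw [this] at hzt'
            rw [trunc_m_le (Nat.le_succ i)] at hzt'
            simp [Subtype.ext_iff] at hzt'
        | p j =>
          exfalso
          have : Pt.idx (Pt.p j) = (j:ℕ) := rfl
          rw [this] at hzt'
          rw [trunc_p_le (Nat.le_succ _)] at hzt'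
          simp [Subtype.ext_iff] at hzt'
      · have hxz : z = x := trunc_of_lt_idx hx (Nat.lt_succ_self _) hzt'
        exact hxz ▸ hz

lemma projW_closedCond {n : ℕ} {Z : Set (W n)} (hZ : WClosedCond n Z) :
    WClosedCond (n+1) (projW n ⁻¹' Z) := by
  intro j hj hmem
  rw [Set.mem_preimage] at hmem
  by_cases hjn : (j:ℕ) ≤ n
  · rw [projW_p, dif_pos hjn] at hmem
    obtain ⟨h1, h2⟩ := hZ j hjn hmem
    constructor
    · erw [Set.mem_preimage, projW_m, dif_pos (pnat_sub_le hjn)]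
      exact h1
    · erw [Set.mem_preimage, projW_m, dif_pos hjn]
      exact h2
  · rw [projW_p, dif_neg hjn] at hmem
    have hje : (j:ℕ) = n + 1 := by
      have := hj
      simp [FPt.idx] at this
      omega
    constructor
    · erw [Set.mem_preimage, projW_m, dif_pos (show (j:ℕ) - 1 ≤ n by omega)]
      have he : (⟨FPt.m ((j:ℕ)-1), show (FPt.m ((j:ℕ)-1)).idx ≤ n by simp [FPt.idx]; omega⟩ : W n) = ⟨.m n, le_refl n⟩ :=
        Subtype.ext (congrArg FPt.m (by omega))
      rw [he]
      exact hmem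
    · erw [Set.mem_preimage, projW_m, dif_neg (by omega : ¬ (j:ℕ) ≤ n)]
      exact hmem

lemma projW_eq_p {n : ℕ} {j : ℕ+} (hj : (j:ℕ) ≤ n) {w : W (n+1)}
    (h : projW n w = ⟨.p j, hj⟩) : w = ⟨.p j, le_trans hj (Nat.le_succ n)⟩ := by
  rcases w with ⟨v, hv⟩
  cases v with
  | m i =>
    by_cases hi : i ≤ n
    · erw [projW_m, dif_pos hi] at h; exact absurd (congrArg Subtype.val h) (by simp)
    · erw [projW_m, dif_neg hi] at h; exact absurd (congrArg Subtype.val h) (by simp)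
  | p j' =>
    by_cases hj' : (j':ℕ) ≤ n
    · rw [projW_p, dif_pos hj'] at h
      have : j' = j := by simpa using congrArg Subtype.val h
      subst this; rfl
    · rw [projW_p, dif_neg hj'] at h; exact absurd (congrArg Subtype.val h) (by simp)

lemma projW_image_closedCond {n : ℕ} {Z : Set (W (n+1))} (hZ : WClosedCond (n+1) Z) :
    WClosedCond n (projW n '' Z) := by
  intro j hj hmem
  obtain ⟨w, hw, hproj⟩ := hmem
  have hwp := projW_eq_p hj hproj
  subst hwp
  obtain ⟨h1, h2⟩ := hZ j (le_trans hj (Nat.le_succ n)) hw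
  constructor
  · refine ⟨⟨.m ((j:ℕ)-1), le_trans (pnat_sub_le hj) (Nat.le_succ n)⟩, h1, ?_⟩
    erw [projW_m, dif_pos (pnat_sub_le hj)]
  · refine ⟨⟨.m (j:ℕ), le_trans hj (Nat.le_succ n)⟩, h2, ?_⟩
    exact dif_pos hj

lemma projW_surjective (n : ℕ) : Function.Surjective (projW n) := by
  rintro ⟨v, hv⟩
  cases v with
  | m i =>
    refine ⟨⟨.m i, le_trans hv (Nat.le_succ n)⟩, ?_⟩
    exact dif_pos hv
  | p j =>
    refine ⟨⟨.p j, le_trans hv (Nat.le_succ n)⟩, ?_⟩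
    exact dif_pos hv

instance W.finite (n : ℕ) : Finite (W n) := by
  apply Finite.of_injective (α := W n) (β := Fin (n+1) ⊕ Fin (n+1)) (fun x =>
    match x with
    | ⟨.m i, h⟩ => Sum.inl ⟨i, Nat.lt_succ_of_le h⟩
    | ⟨.p j, h⟩ => Sum.inr ⟨(j:ℕ)-1, by
        have : (j:ℕ) ≤ n := h
        omega⟩)
  rintro ⟨a | a, ha⟩ ⟨b | b, hb⟩ h <;> simp_all
  have ha' : 1 ≤ (a:ℕ) := a.one_le
  have hb' : 1 ≤ (b:ℕ) := b.one_le
  exact PNat.coe_injective (by omega)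

/-- Each `projW n` is a continuous closed surjection with finite fibers, and the
inverse limit of the tower `(W n, projW)` is homeomorphic to the space `X` whose
closed sets are the specialization-stable subsets that are finite or contain `m ∞`. -/
theorem stmt_13 (T : ∀ n, TopologicalSpace (W n))
    (hT : ∀ (n : ℕ) (Z : Set (W n)), IsClosed[T n] Z ↔ WClosedCond n Z)
    (tX : TopologicalSpace Pt)
    (htX : ∀ Z : Set Pt, IsClosed[tX] Z ↔ ClosedCond Z) :
    (∀ n, Continuous[T (n + 1), T n] (projW n)) ∧
    (∀ n, @IsClosedMap _ _ (T (n + 1)) (T n) (projW n)) ∧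
    (∀ n, Function.Surjective (projW n)) ∧
    (∀ (n : ℕ) (y : W n), (projW n ⁻¹' {y}).Finite) ∧
    Nonempty
      (@Homeomorph Wlim Pt
        (@instTopologicalSpaceSubtype _ _ (@Pi.topologicalSpace ℕ (fun n => W n) T)) tX) := by
  letI : ∀ n, TopologicalSpace (W n) := T
  letI : TopologicalSpace Pt := tX
  refine ⟨?_, ?_, projW_surjective, fun n y => Set.toFinite _, ?_⟩
  · intro n
    rw [continuous_iff_isClosed]
    intro Z hZ
    rw [hT]
    exact projW_closedCond ((hT n Z).mp hZ)
  · intro n Z hZ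
    rw [hT]
    exact projW_image_closedCond ((hT (n+1) Z).mp hZ)
  · have hconttrunc : ∀ n, Continuous (trunc n) := by
      intro n
      rw [continuous_iff_isClosed]
      intro Z hZ
      rw [htX]
      exact closedCond_preimage n Z ((hT n Z).mp hZ)
    have hcont : Continuous phi :=
      Continuous.subtype_mk (continuous_pi hconttrunc) _
    have hclosed : IsClosedMap phi := by
      intro Z hZ
      rw [phi_image Z ((htX Z).mp hZ)]
      refine isClosed_iInter fun n => IsClosed.preimage
        (Continuous.comp (continuous_apply n) continuous_subtype_val) ?_
      exact (hT n _).mpr (WClosed_image ((htX Z).mp hZ).1 n)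
    have hopen : IsOpenMap phi := by
      intro U hU
      rw [← compl_compl (phi '' U), ← Set.image_compl_eq phi_bijective]
      exact (hclosed _ hU.isClosed_compl).isOpen_compl
    exact ⟨(Equiv.toHomeomorphOfContinuousOpen
      (Equiv.ofBijective phi phi_bijective) hcont hopen).symm⟩
end
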